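/- arXiv:2402.15463 — 10 statements merged into one kernel-verified Lean document; each statement's English description precedes it below -/
import Mathlib

section
/- If a permutation π of [n] avoids the pattern 231 and (a,b) and (c,d) are 2-cycles in the disjoint cycle decomposition of π with a<b, c<d, and a<c, then either b<c or b>d (i.e., no two 2-cycles cross). -/
def Avoids231 {n : ℕ} (π : Equiv.Perm (Fin n)) : Prop :=
  ¬ ∃ i j k : Fin n, i < j ∧ j < k ∧ π k < π i ∧ π i < π j

theorem no_crossing_two_cycles {n : ℕ} (π : Equiv.Perm (Fin n)) (h : Avoids231 π)
    (a b c d : Fin n) (hab : a < b) (hcd : c < d) (hac : a < c)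
    (h1 : π a = b) (h2 : π b = a) (h3 : π c = d) (h4 : π d = c) :
    b < c ∨ d < b := by
  by_contra hcon
  push_neg at hcon
  obtain ⟨hcb, hbd⟩ := hcon
  have hbc : b ≠ c := by
    intro he
    rw [he] at h2
    rw [h3] at h2
    exact absurd (h2 ▸ (hac.trans hcd)) (lt_irrefl _)
  exact h ⟨a, c, b, hac, lt_of_le_of_ne hcb (Ne.symm hbc), by
    rw [h1, h2, h3]; exact ⟨hab, (lt_of_le_of_ne hbd (by
      intro he; rw [he] at h2; rw [h4] at h2; exact absurd (h2 ▸ hac) (lt_irrefl _)))⟩⟩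
end

section
/- Suppose π ∈ S_n avoids 231 and contains two disjoint 3-cycles (a,c,b) and (d,f,e) with a<b<c, d<e<f, and a<d. Then exactly one of the following holds: (i) c<d; (ii) c>f and d<b<e; (iii) c>f and e<b<f. -/
theorem two_three_cycles_configs {n : ℕ} (π : Equiv.Perm (Fin n)) (h : Avoids231 π)
    (a b c d e f : Fin n)
    (hab : a < b) (hbc : b < c) (hde : d < e) (hef : e < f) (had : a < d)
    (h1 : π a = c) (h2 : π c = b) (h3 : π b = a)
    (h4 : π d = f) (h5 : π f = e) (h6 : π e = d) :
    (c < d ∧ ¬(f < c ∧ d < b ∧ b < e) ∧ ¬(f < c ∧ e < b ∧ b < f)) ∨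
    (¬(c < d) ∧ (f < c ∧ d < b ∧ b < e) ∧ ¬(f < c ∧ e < b ∧ b < f)) ∨
    (¬(c < d) ∧ ¬(f < c ∧ d < b ∧ b < e) ∧ (f < c ∧ e < b ∧ b < f)) := by
  unfold Avoids231 at h
  push_neg at h
  have hbe : b ≠ e := by
    intro hh
    have : a = d := by rw [← h3, ← h6, hh]
    exact absurd this had.ne
  by_cases hcd : c < d
  · exact Or.inl ⟨hcd, fun ⟨hfc, _⟩ => absurd (hfc.trans (hcd.trans (hde.trans hef)))
      (lt_irrefl f), fun ⟨hfc, _⟩ => absurd (hfc.trans (hcd.trans (hde.trans hef)))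
      (lt_irrefl f)⟩
  · have hcd' : c ≠ d := by
      intro hh
      have hbf : b = f := by rw [← h2, ← h4, hh]
      exact absurd (hbc.trans_le (hh ▸ (hde.trans (hbf ▸ hef)).le)) (lt_irrefl b)
    have hdc : d < c := lt_of_le_of_ne (not_lt.mp hcd) (Ne.symm hcd')
    have hcf : c ≠ f := by
      intro hh
      have : b = e := by rw [← h2, ← h5, hh]
      exact hbe this
    have hfc : f < c := by
      have := h a d c had hdc
      rw [h1, h2, h4] at this
      exact lt_of_le_of_ne (this hbc) (Ne.symm hcf)
    have hdb : d < b := by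
      rcases lt_trichotomy b d with hbd | hbd | hbd
      · have := h e f c hef hfc
        rw [h5, h6, h2] at this
        exact absurd (hde.trans_le (this hbd)) (lt_irrefl d)
      · have : a = f := by rw [← h3, ← h4, hbd]
        exact absurd this (ne_of_lt (had.trans (hde.trans hef)))
      · exact hbd
    have hbf' : b < f := by
      rcases lt_trichotomy b f with hbf | hbf | hbf
      · exact hbf
      · have : a = e := by rw [← h3, ← h5, hbf]
        exact absurd this (ne_of_lt (had.trans hde))
      · have := h e f b hef hbf
        rw [h5, h6, h3] at this
        exact absurd (hde.trans_le (this had)) (lt_irrefl d)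
    rcases lt_or_gt_of_ne hbe with hb | hb
    · exact Or.inr (Or.inl ⟨hcd, ⟨hfc, hdb, hb⟩,
        fun ⟨_, heb, _⟩ => absurd (hb.trans heb) (lt_irrefl b)⟩)
    · exact Or.inr (Or.inr ⟨hcd,
        fun ⟨_, _, hbe'⟩ => absurd (hb.trans hbe') (lt_irrefl e), ⟨hfc, hb, hbf'⟩⟩)
end

section
/- If π ∈ S_n avoids 231 and contains a 3-cycle (a,c,b) with a<b<c (meaning π(a)=c, π(c)=b, π(b)=a) together with two 2-cycles (e₁,f₁) and (e₂,f₂) satisfying e₁<f₁<e₂<f₂, then the configuration a<e₁<f₁<e₂<b<f₂<c is impossible. -/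
theorem forbidden_config_one {n : ℕ} (π : Equiv.Perm (Fin n)) (h : Avoids231 π)
    (a b c e₁ f₁ e₂ f₂ : Fin n)
    (h1 : π a = c) (h2 : π c = b) (h3 : π b = a)
    (h4 : π e₁ = f₁) (h5 : π f₁ = e₁) (h6 : π e₂ = f₂) (h7 : π f₂ = e₂)
    (o1 : a < e₁) (o2 : e₁ < f₁) (o3 : f₁ < e₂) (o4 : e₂ < b) (o5 : b < f₂) (o6 : f₂ < c) :
    False := by
  exact h ⟨e₁, e₂, b, lt_trans o2 o3, o4, by
    rw [h3, h4]; exact lt_trans o1 o2, by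
    rw [h4, h6]; exact lt_trans (lt_trans o3 o4) o5⟩
end

section
/- If π ∈ S_n avoids 231 and contains a 3-cycle (a,c,b) with a<b<c (meaning π(a)=c, π(c)=b, π(b)=a) together with two 2-cycles (e₁,f₁) and (e₂,f₂) satisfying e₁<f₁<e₂<f₂, then the configuration a<e₁<b<f₁<e₂<f₂<c is impossible. -/
theorem forbidden_config_two {n : ℕ} (π : Equiv.Perm (Fin n)) (h : Avoids231 π)
    (a b c e₁ f₁ e₂ f₂ : Fin n)
    (h1 : π a = c) (h2 : π c = b) (h3 : π b = a)
    (h4 : π e₁ = f₁) (h5 : π f₁ = e₁) (h6 : π e₂ = f₂) (h7 : π f₂ = e₂)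
    (o1 : a < e₁) (o2 : e₁ < b) (o3 : b < f₁) (o4 : f₁ < e₂) (o5 : e₂ < f₂) (o6 : f₂ < c) :
    False := by
  exact h ⟨e₁, e₂, c, o2.trans (o3.trans o4), o5.trans o6,
    by rw [h2, h4]; exact o3, by rw [h4, h6]; exact o4.trans o5⟩
end

section
/- If π ∈ S_n avoids 231 and contains a 3-cycle (a,c,b) with a<b<c (π(a)=c, π(c)=b, π(b)=a) and two fixed points g₁<g₂, then it is impossible that a<g₁<g₂<b, and it is impossible that b<g₁<g₂<c. That is, at most one fixed point lies strictly between a and b, and at most one lies strictly between b and c. -/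
theorem at_most_one_fixed_point_under_arc {n : ℕ} (π : Equiv.Perm (Fin n)) (h : Avoids231 π)
    (a b c g₁ g₂ : Fin n)
    (hab : a < b) (hbc : b < c)
    (h1 : π a = c) (h2 : π c = b) (h3 : π b = a)
    (hg1 : π g₁ = g₁) (hg2 : π g₂ = g₂) (hgg : g₁ < g₂) :
    ¬(a < g₁ ∧ g₂ < b) ∧ ¬(b < g₁ ∧ g₂ < c) := by
  constructor
  · rintro ⟨hag, hgb⟩
    exact h ⟨g₁, g₂, b, hgg, hgb, by rw [h3, hg1, hg2]; exact ⟨hag, hgg⟩⟩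
  · rintro ⟨hbg, hgc⟩
    exact h ⟨g₁, g₂, c, hgg, hgc, by rw [h2, hg1, hg2]; exact ⟨hbg, hgg⟩⟩
end

section
/- The number of 231-avoiding permutations of [n] that are involutions (i.e., π² = id) is 2^{n-1} for all n ≥ 1. Equivalently, the generating function for 231-avoiding involutions is (1-z)/(1-2z). -/
namespace Av231

variable {m : ℕ}

/-- Block boundaries determined by a set `S` of "ascent positions". -/
def B (S : Finset (Fin m)) : Finset ℕ := insert 0 (S.image fun s => s.val + 1)

lemma zero_mem_B (S : Finset (Fin m)) : 0 ∈ B S := Finset.mem_insert_self _ _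

lemma mem_B_iff {S : Finset (Fin m)} {b : ℕ} :
    b ∈ B S ↔ b = 0 ∨ ∃ s ∈ S, (s : ℕ) + 1 = b := by
  simp [B]

lemma mem_B_lt {S : Finset (Fin m)} {b : ℕ} (hb : b ∈ B S) : b < m + 1 := by
  rcases mem_B_iff.1 hb with rfl | ⟨s, _, rfl⟩
  · omega
  · have := s.isLt; omega

/-- Left end of the block containing `i`. -/
def lb (S : Finset (Fin m)) (i : ℕ) : ℕ :=
  ((B S).filter (· ≤ i)).max' ⟨0, by simp [zero_mem_B]⟩

/-- Right end (exclusive) of the block containing `i`. -/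
def rb (S : Finset (Fin m)) (i : ℕ) : ℕ :=
  if h : ((B S).filter (i < ·)).Nonempty then ((B S).filter (i < ·)).min' h else m + 1

lemma lb_le (S : Finset (Fin m)) (i : ℕ) : lb S i ≤ i := by
  have := Finset.max'_mem ((B S).filter (· ≤ i)) ⟨0, by simp [zero_mem_B]⟩
  exact (Finset.mem_filter.1 this).2

lemma lb_mem (S : Finset (Fin m)) (i : ℕ) : lb S i ∈ B S := by
  have := Finset.max'_mem ((B S).filter (· ≤ i)) ⟨0, by simp [zero_mem_B]⟩
  exact (Finset.mem_filter.1 this).1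

lemma le_lb {S : Finset (Fin m)} {b : ℕ} (i : ℕ) (hb : b ∈ B S) (h : b ≤ i) : b ≤ lb S i := by
  unfold lb
  apply Finset.le_max'
  exact Finset.mem_filter.2 ⟨hb, h⟩

lemma lt_rb {S : Finset (Fin m)} {i : ℕ} (hi : i < m + 1) : i < rb S i := by
  unfold rb
  split
  · next h => exact (Finset.mem_filter.1 (Finset.min'_mem _ h)).2
  · exact hi

lemma rb_le {S : Finset (Fin m)} {b i : ℕ} (hb : b ∈ B S) (h : i < b) : rb S i ≤ b := by
  have hne : ((B S).filter (i < ·)).Nonempty := ⟨b, Finset.mem_filter.2 ⟨hb, h⟩⟩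
  unfold rb
  rw [dif_pos hne]
  exact Finset.min'_le _ _ (Finset.mem_filter.2 ⟨hb, h⟩)

lemma rb_cases (S : Finset (Fin m)) (i : ℕ) : rb S i = m + 1 ∨ rb S i ∈ B S := by
  unfold rb
  split
  · next h => exact Or.inr (Finset.mem_filter.1 (Finset.min'_mem _ h)).1
  · exact Or.inl rfl

lemma rb_le_succ (S : Finset (Fin m)) (i : ℕ) : rb S i ≤ m + 1 := by
  rcases rb_cases S i with h | h
  · omega
  · exact le_of_lt (mem_B_lt h)

lemma lb_mono (S : Finset (Fin m)) {i j : ℕ} (h : i ≤ j) : lb S i ≤ lb S j :=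
  le_lb j (lb_mem S i) ((lb_le S i).trans h)

/-- If `j` lies in the block of `i`, they have the same block. -/
lemma lb_rb_eq {S : Finset (Fin m)} {i j : ℕ} (hi : i < m + 1) (hj : j < m + 1)
    (h1 : lb S i ≤ j) (h2 : j < rb S i) : lb S j = lb S i ∧ rb S j = rb S i := by
  have hli := lb_le S i
  have hri := lt_rb (S := S) hi
  have hlj := lb_le S j
  have hrj := lt_rb (S := S) hj
  have hl1 : lb S i ≤ lb S j := le_lb j (lb_mem S i) h1
  have hl : lb S j = lb S i := by
    by_contra hne
    have hgt : lb S i < lb S j := lt_of_le_of_ne hl1 (Ne.symm hne)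
    have hji : i < lb S j := by
      by_contra hle
      exact absurd (le_lb i (lb_mem S j) (by omega)) (by omega)
    have := rb_le (lb_mem S j) hji
    omega
  refine ⟨hl, le_antisymm ?_ ?_⟩
  · rcases rb_cases S i with h | h
    · have := rb_le_succ S j; omega
    · exact rb_le h (by omega)
  · rcases rb_cases S j with h | h
    · have := rb_le_succ S i; omega
    · have hji : i < rb S j := by
        by_contra hle
        have : rb S j ≤ lb S i := le_lb i h (by omega)
        omega
      exact rb_le h hji



/-- The layered permutation (as a function) with ascents exactly at `S`. -/
def fS (S : Finset (Fin m)) : Fin (m + 1) → Fin (m + 1) := fun i =>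
  ⟨lb S i + rb S i - 1 - i, by
    have h1 := lb_le S i
    have h2 := lt_rb (S := S) (i := (i : ℕ)) i.isLt
    have h3 := rb_le_succ S i
    omega⟩

lemma fS_val (S : Finset (Fin m)) (i : Fin (m + 1)) :
    (fS S i : ℕ) = lb S i + rb S i - 1 - i := rfl

lemma fS_mem_block (S : Finset (Fin m)) (i : Fin (m + 1)) :
    lb S i ≤ (fS S i : ℕ) ∧ (fS S i : ℕ) < rb S i := by
  have h1 := lb_le S i
  have h2 := lt_rb (S := S) (i := (i : ℕ)) i.isLt
  rw [fS_val]
  omega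

lemma fS_invol (S : Finset (Fin m)) : Function.Involutive (fS S) := by
  intro i
  have h1 := lb_le S i
  have h2 := lt_rb (S := S) (i := (i : ℕ)) i.isLt
  obtain ⟨hm1, hm2⟩ := fS_mem_block S i
  obtain ⟨hl, hr⟩ := lb_rb_eq (S := S) (i := (i : ℕ)) (j := (fS S i : ℕ))
    i.isLt (fS S i).isLt hm1 hm2
  apply Fin.ext
  rw [fS_val, hl, hr, fS_val]
  omega

/-- The layered permutation with ascents exactly at `S`. -/
def permS (S : Finset (Fin m)) : Equiv.Perm (Fin (m + 1)) :=
  Function.Involutive.toPerm (fS S) (fS_invol S)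

lemma permS_apply (S : Finset (Fin m)) (i : Fin (m + 1)) : permS S i = fS S i := rfl

lemma permS_sq (S : Finset (Fin m)) : permS S * permS S = 1 :=
  Equiv.ext fun x => fS_invol S x

lemma permS_avoids (S : Finset (Fin m)) : Avoids231 (permS S) := by
  rintro ⟨i, j, k, hij, hjk, h1, h2⟩
  rw [Fin.lt_def] at hij hjk h1 h2
  simp only [permS_apply, fS_val] at h1 h2
  have hli := lb_le S i
  have hri := lt_rb (S := S) (i := (i : ℕ)) i.isLt
  have hlj := lb_le S j
  have hrj := lt_rb (S := S) (i := (j : ℕ)) j.isLt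
  have hlk := lb_le S k
  have hrk := lt_rb (S := S) (i := (k : ℕ)) k.isLt
  by_cases hcase : lb S j ≤ (i : ℕ)
  · -- i and j in the same block: fS is decreasing there, contradiction with h2
    obtain ⟨hl, hr⟩ := lb_rb_eq (S := S) (i := (j : ℕ)) (j := (i : ℕ))
      j.isLt i.isLt hcase (by omega)
    omega
  · -- j in a later block than i
    have hib : (i : ℕ) < lb S j := by omega
    have hrble : rb S (i : ℕ) ≤ lb S j := rb_le (lb_mem S j) hib
    have hmono : lb S (j : ℕ) ≤ lb S (k : ℕ) := lb_mono S (by omega)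
    omega

/-- The ascent set of a permutation. -/
def asc (π : Equiv.Perm (Fin (m + 1))) : Finset (Fin m) :=
  Finset.univ.filter fun i => π i.castSucc < π i.succ

lemma mem_asc {π : Equiv.Perm (Fin (m + 1))} {i : Fin m} :
    i ∈ asc π ↔ π i.castSucc < π i.succ := by simp [asc]

lemma asc_permS (S : Finset (Fin m)) : asc (permS S) = S := by
  ext i
  rw [mem_asc]
  have hc : ((i.castSucc : Fin (m + 1)) : ℕ) = (i : ℕ) := rfl
  have hs : ((i.succ : Fin (m + 1)) : ℕ) = (i : ℕ) + 1 := rfl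
  rw [Fin.lt_def]
  simp only [permS_apply, fS_val, hc, hs]
  have him : (i : ℕ) < m := i.isLt
  have hli := lb_le S i
  have hri := lt_rb (S := S) (i := (i : ℕ)) (by omega)
  have hls := lb_le S ((i : ℕ) + 1)
  have hrs := lt_rb (S := S) (i := (i : ℕ) + 1) (by omega)
  constructor
  · intro hlt
    by_contra hiS
    -- i+1 is not a boundary
    have hnb : (i : ℕ) + 1 ∉ B S := by
      intro hmem
      rcases mem_B_iff.1 hmem with h0 | ⟨s, hsS, hval⟩
      · omega
      · have : s = i := Fin.ext (by omega)
        exact hiS (this ▸ hsS)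
    have hrne : rb S (i : ℕ) ≠ (i : ℕ) + 1 := by
      rcases rb_cases S (i : ℕ) with h | h
      · omega
      · intro he; exact hnb (he ▸ h)
    obtain ⟨hl, hr⟩ := lb_rb_eq (S := S) (i := (i : ℕ)) (j := (i : ℕ) + 1)
      (by omega) (by omega) (by omega) (by omega)
    omega
  · intro hiS
    have hmem : (i : ℕ) + 1 ∈ B S := mem_B_iff.2 (Or.inr ⟨i, hiS, rfl⟩)
    have h1 : rb S (i : ℕ) ≤ (i : ℕ) + 1 := rb_le hmem (by omega)
    have h2 : (i : ℕ) + 1 ≤ lb S ((i : ℕ) + 1) := le_lb _ hmem le_rfl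
    omega


section Structure

variable {π : Equiv.Perm (Fin (m + 1))}

lemma hinv_of (hI : π * π = 1) (x : Fin (m + 1)) : π (π x) = x := by
  have : (π * π) x = (1 : Equiv.Perm (Fin (m + 1))) x := by rw [hI]
  simpa using this

lemma no312 (hA : Avoids231 π) (hI : π * π = 1) (a b c : Fin (m + 1))
    (hab : a < b) (hbc : b < c) (h1 : π b < π c) (h2 : π c < π a) : False := by
  apply hA
  exact ⟨π b, π c, π a, h1, h2, by rw [hinv_of hI, hinv_of hI]; exact hab,
    by rw [hinv_of hI, hinv_of hI]; exact hbc⟩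

lemma ascA (hA : Avoids231 π) (hI : π * π = 1) (i : Fin m)
    (hasc : π i.castSucc < π i.succ) (a : Fin (m + 1)) (ha : (a : ℕ) ≤ (i : ℕ)) :
    π a < π i.succ := by
  rcases eq_or_lt_of_le ha with he | hlt
  · have : a = i.castSucc := Fin.ext (by simpa using he)
    rw [this]; exact hasc
  · by_contra hle
    have hne : π i.succ ≠ π a := by
      intro he
      have : i.succ = a := π.injective he
      rw [← this] at hlt
      simp at hlt
    have h2 : π i.succ < π a := lt_of_le_of_ne (not_lt.1 hle) hne
    exact no312 hA hI a i.castSucc i.succ (by rw [Fin.lt_def]; simpa using hlt)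
      (by rw [Fin.lt_def]; simp) hasc h2

lemma ascC (hA : Avoids231 π) (hI : π * π = 1) (i : Fin m)
    (hasc : π i.castSucc < π i.succ) (a : Fin (m + 1)) (ha : (a : ℕ) ≤ (i : ℕ)) :
    ((π a : Fin (m + 1)) : ℕ) ≤ (i : ℕ) := by
  by_contra hgt
  have hAa := ascA hA hI i hasc a ha
  by_cases hb : π a = i.succ
  · have heq : π i.succ = a := by rw [← hb]; exact hinv_of hI a
    rw [heq, hb, Fin.lt_def] at hAa
    simp at hAa
    omega
  · have hbv : (i : ℕ) + 1 < ((π a : Fin (m + 1)) : ℕ) := by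
      have h1 : ((π a : Fin (m + 1)) : ℕ) ≠ (i : ℕ) + 1 := by
        intro he
        exact hb (Fin.ext (by simpa using he))
      omega
    apply hA
    refine ⟨a, i.succ, π a, ?_, ?_, ?_, hAa⟩
    · rw [Fin.lt_def]; simp; omega
    · rw [Fin.lt_def]; simpa using hbv
    · rw [hinv_of hI, Fin.lt_def]; omega

lemma ascC' (hA : Avoids231 π) (hI : π * π = 1) (i : Fin m)
    (hasc : π i.castSucc < π i.succ) (b : Fin (m + 1)) (hb : (i : ℕ) < (b : ℕ)) :
    (i : ℕ) < ((π b : Fin (m + 1)) : ℕ) := by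
  by_contra hle
  have := ascC hA hI i hasc (π b) (by omega)
  rw [hinv_of hI] at this
  omega

lemma chain_aux (f : ℕ → ℕ) (L R : ℕ) (h : ∀ a, L ≤ a → a + 1 < R → f (a + 1) < f a) :
    ∀ d a, L ≤ a → a + d < R → f (a + d) + d ≤ f a := by
  intro d
  induction d with
  | zero => intro a _ _; simp
  | succ d ih =>
    intro a h1 h2
    have hd := ih a h1 (by omega)
    have hs := h (a + d) (by omega) (by omega)
    have he : a + (d + 1) = (a + d) + 1 := by omega
    rw [he]
    omega

lemma eq_permS_of (hA : Avoids231 π) (hI : π * π = 1) : permS (asc π) = π := by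
  apply Equiv.ext
  intro x
  apply Fin.ext
  set S := asc π with hS
  show lb S (x : ℕ) + rb S (x : ℕ) - 1 - (x : ℕ) = ((π x : Fin (m + 1)) : ℕ)
  have hL := lb_le S (x : ℕ)
  have hR := lt_rb (S := S) (i := (x : ℕ)) x.isLt
  have hRm := rb_le_succ S (x : ℕ)
  set f : ℕ → ℕ := fun t => if h : t < m + 1 then ((π ⟨t, h⟩ : Fin (m + 1)) : ℕ) else 0
    with hf
  have hfx : ∀ y : Fin (m + 1), f (y : ℕ) = ((π y : Fin (m + 1)) : ℕ) := by
    intro y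
    simp only [hf, y.isLt, dif_pos, Fin.eta]
  have hlow : ∀ y : Fin (m + 1), lb S (x : ℕ) ≤ (y : ℕ) →
      lb S (x : ℕ) ≤ ((π y : Fin (m + 1)) : ℕ) := by
    intro y hy
    rcases Nat.eq_zero_or_pos (lb S (x : ℕ)) with h0 | hpos
    · omega
    · rcases mem_B_iff.1 (lb_mem S (x : ℕ)) with h0 | ⟨s, hs, hsum⟩
      · omega
      · rw [hS] at hs
        have := ascC' hA hI s (mem_asc.1 hs) y (by omega)
        omega
  have hhigh : ∀ y : Fin (m + 1), (y : ℕ) < rb S (x : ℕ) →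
      ((π y : Fin (m + 1)) : ℕ) < rb S (x : ℕ) := by
    intro y hy
    rcases rb_cases S (x : ℕ) with h | h
    · have := (π y).isLt; omega
    · rcases mem_B_iff.1 h with h0 | ⟨s, hs, hsum⟩
      · omega
      · rw [hS] at hs
        have := ascC hA hI s (mem_asc.1 hs) y (by omega)
        omega
  have hdesc : ∀ a, lb S (x : ℕ) ≤ a → a + 1 < rb S (x : ℕ) → f (a + 1) < f a := by
    intro a ha1 ha2
    have ham : a < m := by omega
    have hnotin : (⟨a, ham⟩ : Fin m) ∉ S := by
      intro hin
      have hmem : a + 1 ∈ B S := mem_B_iff.2 (Or.inr ⟨⟨a, ham⟩, hin, rfl⟩)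
      by_cases hax : a + 1 ≤ (x : ℕ)
      · have := le_lb (x : ℕ) hmem hax; omega
      · have := rb_le hmem (show (x : ℕ) < a + 1 by omega); omega
    rw [hS, mem_asc] at hnotin
    have hne : π (⟨a, ham⟩ : Fin m).castSucc ≠ π (⟨a, ham⟩ : Fin m).succ := by
      intro he
      have h2 := π.injective he
      have : ((⟨a, ham⟩ : Fin m).castSucc : ℕ) = ((⟨a, ham⟩ : Fin m).succ : ℕ) :=
        congrArg Fin.val h2
      simp at this
    have hlt : π (⟨a, ham⟩ : Fin m).succ < π (⟨a, ham⟩ : Fin m).castSucc :=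
      lt_of_le_of_ne (not_lt.1 hnotin) (Ne.symm hne)
    have e1 := hfx ((⟨a, ham⟩ : Fin m).succ)
    have e2 := hfx ((⟨a, ham⟩ : Fin m).castSucc)
    simp only [Fin.val_succ, Fin.coe_castSucc] at e1 e2
    rw [e1, e2]
    exact hlt
  have c1 := chain_aux f _ _ hdesc (rb S (x : ℕ) - 1 - (x : ℕ)) (x : ℕ) hL (by omega)
  have c2 := chain_aux f _ _ hdesc ((x : ℕ) - lb S (x : ℕ)) (lb S (x : ℕ)) le_rfl
    (by omega)
  have e1 : (x : ℕ) + (rb S (x : ℕ) - 1 - (x : ℕ)) = rb S (x : ℕ) - 1 := by omega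
  have e2 : lb S (x : ℕ) + ((x : ℕ) - lb S (x : ℕ)) = (x : ℕ) := by omega
  rw [e1] at c1
  rw [e2] at c2
  have hy1 := hfx ⟨rb S (x : ℕ) - 1, by omega⟩
  have hy2 := hfx ⟨lb S (x : ℕ), by omega⟩
  simp only [Fin.val_mk] at hy1 hy2 ⊢
  rw [hy1] at c1
  rw [hy2] at c2
  have hx := hfx x
  have hlo := hlow ⟨rb S (x : ℕ) - 1, by omega⟩ (by simp; omega)
  have hhi := hhigh ⟨lb S (x : ℕ), by omega⟩ (by simp; omega)
  omega

end Structure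

end Av231

theorem count_231_avoiding_involutions (n : ℕ) (hn : 1 ≤ n) :
    Nat.card {π : Equiv.Perm (Fin n) // Avoids231 π ∧ π * π = 1} = 2 ^ (n - 1) := by
  obtain ⟨m, rfl⟩ : ∃ m, n = m + 1 := ⟨n - 1, by omega⟩
  simp only [Nat.add_sub_cancel]
  have hb : Function.Bijective (fun S : Finset (Fin m) =>
      (⟨Av231.permS S, Av231.permS_avoids S, Av231.permS_sq S⟩ :
        {π : Equiv.Perm (Fin (m + 1)) // Avoids231 π ∧ π * π = 1})) := by
    constructor
    · intro S T h
      have h2 : Av231.permS S = Av231.permS T := congrArg Subtype.val h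
      calc S = Av231.asc (Av231.permS S) := (Av231.asc_permS S).symm
        _ = Av231.asc (Av231.permS T) := by rw [h2]
        _ = T := Av231.asc_permS T
    · rintro ⟨π, hA, hI⟩
      exact ⟨Av231.asc π, Subtype.ext (Av231.eq_permS_of hA hI)⟩
  rw [← Nat.card_eq_of_bijective _ hb]
  simp [Nat.card_eq_fintype_card]
end

section
/- The number of 231-avoiding fixed-point-free involutions of [n] is 0 when n is odd, and 2^{(n/2)-1} when n ≥ 2 is even. -/
lemma even_card_of_fpf {α : Type*} [DecidableEq α] (s : Finset α) (f : α → α)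
    (hmem : ∀ x ∈ s, f x ∈ s) (hinv : ∀ x ∈ s, f (f x) = x) (hfix : ∀ x ∈ s, f x ≠ x) :
    Even s.card := by
  induction s using Finset.strongInduction with
  | _ s ih =>
    rcases s.eq_empty_or_nonempty with rfl | ⟨x, hx⟩
    · simp
    · have hfx := hmem x hx
      have hne := hfix x hx
      set t := s \ {x, f x} with ht
      have hsub : t ⊂ s := by
        apply Finset.sdiff_ssubset
        · intro y hy
          simp at hy
          rcases hy with rfl | rfl <;> assumption
        · simp
      have hcard : t.card = s.card - 2 := by
        rw [ht, Finset.card_sdiff_of_subset]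
        · congr 1
          rw [Finset.card_insert_of_notMem (by simp [Ne.symm hne]), Finset.card_singleton]
        · intro y hy
          simp at hy
          rcases hy with rfl | rfl <;> assumption
      have htmem : ∀ y ∈ t, f y ∈ t := by
        intro y hy
        simp only [ht, Finset.mem_sdiff, Finset.mem_insert, Finset.mem_singleton] at hy ⊢
        obtain ⟨hys, hyx⟩ := hy
        push_neg at hyx
        refine ⟨hmem y hys, ?_⟩
        rintro (h | h)
        · exact hyx.2 (by rw [← hinv y hys, h])
        · exact hyx.1 (by rw [← hinv y hys, h, hinv x hx])
      have hev : Even t.card :=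
        ih t hsub (fun y hy => htmem y hy)
          (fun y hy => hinv y (Finset.mem_sdiff.mp hy).1)
          (fun y hy => hfix y (Finset.mem_sdiff.mp hy).1)
      have h2 : 2 ≤ s.card := by
        have : ({x, f x} : Finset α) ⊆ s := by
          intro y hy; simp at hy; rcases hy with rfl | rfl <;> assumption
        calc 2 = ({x, f x} : Finset α).card := by
                rw [Finset.card_insert_of_notMem (by simp [Ne.symm hne]), Finset.card_singleton]
          _ ≤ s.card := Finset.card_le_card this
      obtain ⟨m, hm⟩ := hev
      exact ⟨m + 1, by omega⟩

noncomputable def aF (D : Finset ℕ) (i : ℕ) : ℕ := sSup {d | d ∈ D ∧ d ≤ i}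
noncomputable def bF (D : Finset ℕ) (i : ℕ) : ℕ := sInf {d | d ∈ D ∧ i < d}

section DFacts
variable {n : ℕ} {D : Finset ℕ} (h0 : 0 ∈ D) (hn : n ∈ D)

lemma aF_bdd (i : ℕ) : BddAbove {d | d ∈ D ∧ d ≤ i} := ⟨i, fun d hd => hd.2⟩

include h0 in
lemma aF_mem (i : ℕ) : aF D i ∈ D ∧ aF D i ≤ i :=
  by
  have h := Nat.sSup_mem (s := {d | d ∈ D ∧ d ≤ i}) ⟨0, h0, Nat.zero_le i⟩ (aF_bdd i)
  exact h

lemma aF_ge {i d : ℕ} (hd : d ∈ D) (hdi : d ≤ i) : d ≤ aF D i :=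
  le_csSup (aF_bdd i) ⟨hd, hdi⟩

include hn in
lemma bF_mem {i : ℕ} (hi : i < n) : bF D i ∈ D ∧ i < bF D i :=
  by
  have h := Nat.sInf_mem (s := {d | d ∈ D ∧ i < d}) ⟨n, hn, hi⟩
  exact h

lemma bF_le {i d : ℕ} (hd : d ∈ D) (hdi : i < d) : bF D i ≤ d :=
  Nat.sInf_le ⟨hd, hdi⟩

include h0 hn in
lemma aF_bF_block {i x : ℕ} (hi : i < n) (hax : aF D i ≤ x) (hxb : x < bF D i) :
    aF D x = aF D i ∧ bF D x = bF D i := by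
  have hbn : bF D i ≤ n := bF_le hn hi
  have hxn : x < n := lt_of_lt_of_le hxb hbn
  constructor
  · apply le_antisymm
    · have h1 := aF_mem h0 x
      by_cases h : aF D x ≤ i
      · exact aF_ge h1.1 h
      · push_neg at h
        exact absurd (le_trans (bF_le h1.1 h) h1.2) (not_le.mpr hxb)
    · exact aF_ge (aF_mem h0 i).1 hax
  · apply le_antisymm
    · exact bF_le (bF_mem hn hi).1 hxb
    · have h1 := bF_mem hn hxn
      by_cases h : i < bF D x
      · exact bF_le h1.1 h
      · push_neg at h
        have h2 : bF D x ≤ aF D i := aF_ge h1.1 h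
        exact absurd ((h2.trans hax).trans_lt h1.2) (lt_irrefl _)

end DFacts

noncomputable def fV (D : Finset ℕ) (i : ℕ) : ℕ := aF D i + bF D i - 1 - i

def InvPt {n : ℕ} (π : Equiv.Perm (Fin n)) (c : ℕ) : Prop :=
  ∀ j : Fin n, (j : ℕ) < c → (π j : ℕ) < c

section Decode
variable {n : ℕ} {D : Finset ℕ} (h0 : 0 ∈ D) (hn : n ∈ D)

include h0 hn in
lemma fV_bounds {i : ℕ} (hi : i < n) : aF D i ≤ fV D i ∧ fV D i < bF D i := by
  have ha := aF_mem h0 (D := D) i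
  have hb := bF_mem hn hi
  unfold fV; omega

include h0 hn in
lemma fV_invol {i : ℕ} (hi : i < n) : fV D (fV D i) = i := by
  have ha := aF_mem h0 (D := D) i
  have hb := bF_mem hn hi
  have hbd := fV_bounds h0 hn hi
  have hblk := aF_bF_block h0 hn hi hbd.1 hbd.2
  unfold fV at *
  rw [hblk.1, hblk.2]
  omega

noncomputable def decodePerm (n : ℕ) (D : Finset ℕ) (h0 : 0 ∈ D) (hn : n ∈ D) :
    Equiv.Perm (Fin n) :=
  Function.Involutive.toPerm
    (fun i => ⟨fV D i, lt_of_lt_of_le (fV_bounds h0 hn i.2).2 (bF_le hn i.2)⟩)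
    (fun i => Fin.ext (fV_invol h0 hn i.2))

lemma decodePerm_apply (i : Fin n) : (decodePerm n D h0 hn i : ℕ) = fV D i := rfl

lemma decodePerm_invol (i : Fin n) : decodePerm n D h0 hn (decodePerm n D h0 hn i) = i :=
  Fin.ext (fV_invol h0 hn i.2)

lemma decodePerm_avoids : Avoids231 (decodePerm n D h0 hn) := by
  rintro ⟨i, j, k, hij, hjk, hki, hij2⟩
  rw [Fin.lt_def] at hij hjk hki hij2
  simp only [decodePerm_apply] at hki hij2
  have hai := aF_mem h0 (D := D) i
  have hbi := bF_mem hn i.2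
  have hbdi := fV_bounds h0 hn i.2
  have hbdj := fV_bounds h0 hn j.2
  have hbdk := fV_bounds h0 hn k.2
  by_cases h : (j : ℕ) < bF D i
  · have hblk := aF_bF_block h0 hn i.2 (le_trans hai.2 hij.le) h
    unfold fV at hki hij2
    rw [hblk.1, hblk.2] at hij2
    omega
  · push_neg at h
    have h1 : bF D i ≤ aF D j := aF_ge hbi.1 h
    have h2 : aF D j ≤ aF D k := aF_ge (aF_mem h0 (D := D) j).1 (le_trans (aF_mem h0 (D := D) j).2 hjk.le)
    omega

lemma decodePerm_fpf (heven : ∀ d ∈ D, Even d) (i : Fin n) :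
    decodePerm n D h0 hn i ≠ i := by
  intro h
  have hval : fV D i = (i : ℕ) := congrArg Fin.val h
  have ha := aF_mem h0 (D := D) i
  have hb := bF_mem hn i.2
  obtain ⟨x, hx⟩ := heven _ ha.1
  obtain ⟨y, hy⟩ := heven _ hb.1
  unfold fV at hval
  omega

lemma invPt_decode_of_mem {c : ℕ} (hc : c ∈ D) : InvPt (decodePerm n D h0 hn) c := by
  intro j hj
  rw [decodePerm_apply]
  exact lt_of_lt_of_le (fV_bounds h0 hn j.2).2 (bF_le hc hj)

lemma not_invPt_decode {c : ℕ} (hcn : c < n) (hc : c ∉ D) :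
    ¬ InvPt (decodePerm n D h0 hn) c := by
  intro hInv
  have hc0 : c ≠ 0 := fun h => hc (h ▸ h0)
  have hi : c - 1 < n := by omega
  have ha := aF_mem h0 (D := D) (c - 1)
  have hb := bF_mem hn (D := D) hi
  have hbc : c + 1 ≤ bF D (c - 1) := by
    rcases Nat.lt_or_ge (bF D (c-1)) (c+1) with h | h
    · exact absurd hb.1 (by
        have : bF D (c-1) = c := by omega
        rw [this]; exact hc)
    · exact h
  have han : aF D (c - 1) < n := by omega
  have hblk := aF_bF_block h0 hn hi (le_refl _) (by omega : aF D (c-1) < bF D (c-1))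
  have := hInv ⟨aF D (c-1), han⟩ (by simp; omega)
  simp only [decodePerm_apply, fV, Fin.val_mk] at this
  rw [hblk.1, hblk.2] at this
  omega

end Decode

section Encode
variable {n : ℕ} (π : Equiv.Perm (Fin n))

def DInv (π : Equiv.Perm (Fin n)) : Finset ℕ :=
  (Finset.range (n+1)).filter (fun c => ∀ j : Fin n, (j : ℕ) < c → ((π j : ℕ) < c))

lemma mem_DInv {c : ℕ} : c ∈ DInv π ↔ c ≤ n ∧ InvPt π c := by
  simp [DInv, InvPt, Nat.lt_succ_iff]

lemma zero_mem_DInv : 0 ∈ DInv π := by simp [mem_DInv, InvPt]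

lemma n_mem_DInv : n ∈ DInv π := by
  rw [mem_DInv]
  exact ⟨le_refl n, fun j _ => (π j).2⟩

lemma card_filter_lt_eq {c : ℕ} (hcn : c ≤ n) :
    ((Finset.univ : Finset (Fin n)).filter (fun j : Fin n => (j : ℕ) < c)).card = c := by
  classical
  have himg : ((Finset.univ : Finset (Fin n)).filter (fun j : Fin n => (j : ℕ) < c)).image Fin.val
      = Finset.range c := by
    ext m
    simp only [Finset.mem_image, Finset.mem_filter, Finset.mem_univ, true_and,
      Finset.mem_range]
    constructor
    · rintro ⟨j, hj, rfl⟩; exact hj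
    · intro hm; exact ⟨⟨m, lt_of_lt_of_le hm hcn⟩, hm, rfl⟩
  calc ((Finset.univ : Finset (Fin n)).filter (fun j : Fin n => (j : ℕ) < c)).card
      = (((Finset.univ : Finset (Fin n)).filter (fun j : Fin n => (j : ℕ) < c)).image Fin.val).card :=
        (Finset.card_image_of_injective _ Fin.val_injective).symm
    _ = c := by rw [himg, Finset.card_range]

lemma even_of_invPt (hinv : ∀ i, π (π i) = i) (hfpf : ∀ i, π i ≠ i)
    {c : ℕ} (hcn : c ≤ n) (hc : InvPt π c) : Even c := by
  classical
  have h := even_card_of_fpf ((Finset.univ : Finset (Fin n)).filter (fun j : Fin n => (j : ℕ) < c))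
    (fun x => π x)
    (by intro x hx; simp only [Finset.mem_filter, Finset.mem_univ, true_and] at hx ⊢
        exact hc x hx)
    (by intro x _; exact hinv x)
    (by intro x _; exact hfpf x)
  rwa [card_filter_lt_eq hcn] at h

lemma structure_aux (hA : Avoids231 π) (hinv : ∀ i, π (π i) = i) (hfpf : ∀ i, π i ≠ i)
    (i : Fin n) :
    (π i : ℕ) + (i : ℕ) + 1 = aF (DInv π) i + bF (DInv π) i := by
  have h0 : 0 ∈ DInv π := zero_mem_DInv π
  have hn : n ∈ DInv π := n_mem_DInv π
  have ha := aF_mem h0 (D := DInv π) (i : ℕ)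
  have hb := bF_mem hn (D := DInv π) i.2
  suffices key : ∀ a b : ℕ, aF (DInv π) (i : ℕ) = a → bF (DInv π) (i : ℕ) = b →
      (π i : ℕ) + (i : ℕ) + 1 = a + b by
    exact key _ _ rfl rfl
  intro a b hadef hbdef
  rw [hadef] at ha
  rw [hbdef] at hb
  have hbn : b ≤ n := ((mem_DInv π).mp hb.1).1
  have haInv : InvPt π a := ((mem_DInv π).mp ha.1).2
  have hbInv : InvPt π b := ((mem_DInv π).mp hb.1).2
  have hS1 : ∀ j : Fin n, a ≤ (j : ℕ) → a ≤ (π j : ℕ) := by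
    intro j hj
    by_contra h
    push_neg at h
    have h2 := haInv (π j) h
    rw [hinv] at h2
    omega
  have han : a < n := lt_of_le_of_lt ha.2 i.2
  obtain ⟨i0, hi0⟩ : ∃ i0 : Fin n, π ⟨a, han⟩ = i0 := ⟨_, rfl⟩
  have hi0n : (i0 : ℕ) < n := i0.2
  have hpi0 : π i0 = ⟨a, han⟩ := by rw [← hi0, hinv]
  have hpi0v : (π i0 : ℕ) = a := by rw [hpi0]
  have hai0 : a < (i0 : ℕ) := by
    have h1 : a ≤ (i0 : ℕ) := by
      have := hS1 ⟨a, han⟩ (le_refl a)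
      rwa [hi0] at this
    have h2 : π ⟨a, han⟩ ≠ ⟨a, han⟩ := hfpf ⟨a, han⟩
    rw [hi0] at h2
    have h3 : (i0 : ℕ) ≠ a := fun h => h2 (Fin.ext h)
    omega
  have hi0b : (i0 : ℕ) < b := by
    have := hbInv ⟨a, han⟩ (lt_of_le_of_lt ha.2 hb.2)
    rwa [hi0] at this
  have hne_a : ∀ x : Fin n, (x : ℕ) ≠ (i0 : ℕ) → (π x : ℕ) ≠ a := by
    intro x hx hEq
    have h1 : π x = ⟨a, han⟩ := Fin.ext hEq
    have h2 : x = i0 := by rw [← hi0, ← h1, hinv]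
    exact hx (congrArg Fin.val h2)
  have hS5 : ∀ x y : Fin n, a ≤ (x : ℕ) → (x : ℕ) < (y : ℕ) → (y : ℕ) < (i0 : ℕ) →
      (π y : ℕ) < (π x : ℕ) := by
    intro x y hax hxy hyi0
    rcases lt_trichotomy ((π y : ℕ)) ((π x : ℕ)) with h | h | h
    · exact h
    · exact absurd (π.injective (Fin.ext h : π y = π x)) (fun he => by
        rw [he] at hxy; exact lt_irrefl _ hxy)
    · exfalso
      apply hA
      refine ⟨x, y, i0, Fin.lt_def.mpr hxy, Fin.lt_def.mpr hyi0, ?_, Fin.lt_def.mpr h⟩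
      rw [Fin.lt_def, hpi0v]
      have h1 : a ≤ (π x : ℕ) := hS1 x hax
      have h2 : (π x : ℕ) ≠ a := hne_a x (by omega)
      omega
  have hbi0 : b = (i0 : ℕ) + 1 := by
    have hmem : (i0 : ℕ) + 1 ∈ DInv π := by
      rw [mem_DInv]
      refine ⟨by omega, ?_⟩
      intro j hj
      rcases Nat.lt_or_ge (j : ℕ) a with h | h
      · have := haInv j h; omega
      · rcases eq_or_lt_of_le h with h' | h'
        · have hje : j = ⟨a, han⟩ := Fin.ext h'.symm
          rw [hje, hi0]
          omega
        · rcases Nat.lt_or_ge (j : ℕ) (i0 : ℕ) with h2 | h2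
          · have h3 := hS5 ⟨a, han⟩ j (le_refl a) h' h2
            rw [hi0] at h3
            omega
          · have hji : j = i0 := Fin.ext (by omega)
            rw [hji, hpi0v]
            omega
    rcases Nat.lt_or_ge (i : ℕ) ((i0 : ℕ) + 1) with h | h
    · have h4 := bF_le (D := DInv π) hmem h
      omega
    · have h4 := aF_ge (D := DInv π) hmem h
      omega
  have hup : ∀ t, ∀ x : Fin n, (x : ℕ) = a + t → a + t < (i0 : ℕ) →
      (π x : ℕ) + t ≤ (i0 : ℕ) := by
    intro t
    induction t with
    | zero =>
      intro x hx _
      have hxe : x = ⟨a, han⟩ := Fin.ext (by omega)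
      rw [hxe, hi0]
      omega
    | succ t ih =>
      intro x hx hlt
      have hy : a + t < n := by omega
      have h1 := ih ⟨a + t, hy⟩ rfl (by omega)
      have h2 := hS5 ⟨a + t, hy⟩ x (by simp) (by simp; omega) (by omega)
      omega
  have hdown : ∀ t, ∀ x : Fin n, (x : ℕ) + t + 1 = (i0 : ℕ) → a ≤ (x : ℕ) →
      a + 1 + t ≤ (π x : ℕ) := by
    intro t
    induction t with
    | zero =>
      intro x hx hax
      have h1 : a ≤ (π x : ℕ) := hS1 x hax
      have h2 : (π x : ℕ) ≠ a := hne_a x (by omega)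
      omega
    | succ t ih =>
      intro x hx hax
      have hy : (x : ℕ) + 1 < n := by omega
      have h1 := ih ⟨(x : ℕ) + 1, hy⟩ (by simp; omega) (by simp; omega)
      have h2 := hS5 x ⟨(x : ℕ) + 1, hy⟩ hax (by simp) (by simp; omega)
      omega
  rcases eq_or_lt_of_le (show (i : ℕ) ≤ (i0 : ℕ) by omega) with h | h
  · have hie : i = i0 := Fin.ext h
    rw [hie, hpi0v]
    omega
  · have h1 := hup ((i : ℕ) - a) i (by omega) (by omega)
    have h2 := hdown ((i0 : ℕ) - 1 - (i : ℕ)) i (by omega) (by omega)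
    omega

end Encode

def DS (n : ℕ) {m : ℕ} (S : Finset (Fin m)) : Finset ℕ :=
  insert 0 (insert n (S.image (fun s : Fin m => 2 * ((s : ℕ) + 1))))

lemma zero_mem_DS {n m : ℕ} (S : Finset (Fin m)) : 0 ∈ DS n S :=
  Finset.mem_insert_self _ _

lemma n_mem_DS {n m : ℕ} (S : Finset (Fin m)) : n ∈ DS n S := by
  simp [DS]

lemma even_mem_DS {n k m : ℕ} (hk : n = 2 * k) (S : Finset (Fin m)) :
    ∀ d ∈ DS n S, Even d := by
  intro d hd
  simp only [DS, Finset.mem_insert, Finset.mem_image] at hd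
  rcases hd with rfl | rfl | ⟨s, _, rfl⟩
  · exact Even.zero
  · exact ⟨k, by omega⟩
  · exact ⟨(s : ℕ) + 1, by ring⟩

lemma mul_self_iff {n : ℕ} (π : Equiv.Perm (Fin n)) :
    π * π = 1 ↔ ∀ i, π (π i) = i := by
  constructor
  · intro h i
    have := congrArg (fun σ : Equiv.Perm (Fin n) => σ i) h
    simpa using this
  · intro h
    ext i
    simp [Equiv.Perm.mul_apply, h i]

lemma decode_DInv_eq {n : ℕ} (π : Equiv.Perm (Fin n)) (hA : Avoids231 π)
    (hinv : ∀ i, π (π i) = i) (hfpf : ∀ i, π i ≠ i)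
    (h0 : 0 ∈ DInv π) (hn : n ∈ DInv π) :
    decodePerm n (DInv π) h0 hn = π := by
  apply Equiv.ext
  intro i
  apply Fin.ext
  rw [decodePerm_apply]
  have hs := structure_aux π hA hinv hfpf i
  have ha := aF_mem h0 (D := DInv π) (i : ℕ)
  have hb := bF_mem hn (D := DInv π) i.2
  unfold fV
  omega

lemma card_main (n k : ℕ) (hk : n = 2 * k) (hk1 : 1 ≤ k) :
    Nat.card {π : Equiv.Perm (Fin n) // Avoids231 π ∧ π * π = 1 ∧ ∀ i, π i ≠ i}
      = 2 ^ (k - 1) := by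
  classical
  have e : {π : Equiv.Perm (Fin n) // Avoids231 π ∧ π * π = 1 ∧ ∀ i, π i ≠ i}
      ≃ Finset (Fin (k - 1)) := by
    refine
      { toFun := fun π => Finset.univ.filter
          (fun s : Fin (k - 1) => (2 * ((s : ℕ) + 1)) ∈ DInv π.1)
        invFun := fun S => ⟨decodePerm n (DS n S) (zero_mem_DS S) (n_mem_DS S),
          decodePerm_avoids _ _,
          (mul_self_iff _).mpr (decodePerm_invol _ _),
          decodePerm_fpf _ _ (even_mem_DS hk S)⟩
        left_inv := ?_
        right_inv := ?_ }
    · rintro ⟨π, hA, hI, hF⟩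
      have hinv : ∀ i, π (π i) = i := (mul_self_iff π).mp hI
      apply Subtype.ext
      simp only
      have hDeq : DS n (Finset.univ.filter
          (fun s : Fin (k - 1) => (2 * ((s : ℕ) + 1)) ∈ DInv π)) = DInv π := by
        ext c
        simp only [DS, Finset.mem_insert, Finset.mem_image, Finset.mem_filter,
          Finset.mem_univ, true_and]
        constructor
        · rintro (rfl | rfl | ⟨s, hs, rfl⟩)
          · exact zero_mem_DInv π
          · exact n_mem_DInv π
          · exact hs
        · intro hc
          rcases Nat.eq_zero_or_pos c with rfl | hcpos
          · left; rfl
          rcases eq_or_lt_of_le ((mem_DInv π).mp hc).1 with hce | hclt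
          · right; left; exact hce
          right; right
          obtain ⟨m, hm⟩ := even_of_invPt π hinv hF (le_of_lt hclt) ((mem_DInv π).mp hc).2
          have hmk : m - 1 < k - 1 := by omega
          refine ⟨⟨m - 1, hmk⟩, ?_, ?_⟩
          · have h2 : 2 * (((⟨m - 1, hmk⟩ : Fin (k - 1)) : ℕ) + 1) = c := by
              simp only [Fin.val_mk]; omega
            rw [h2]; exact hc
          · simp only [Fin.val_mk]; omega
      have key : ∀ (D : Finset ℕ) (hD : D = DInv π) (h0 : 0 ∈ D) (hn' : n ∈ D),
          decodePerm n D h0 hn' = π := by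
        rintro D rfl h0 hn'
        exact decode_DInv_eq π hA hinv hF h0 hn'
      exact key _ hDeq _ _
    · intro S
      ext s
      simp only [Finset.mem_filter, Finset.mem_univ, true_and]
      have hsn : 2 * ((s : ℕ) + 1) < n := by
        have := s.2; omega
      constructor
      · intro hmem
        by_contra hs
        have hnot : 2 * ((s : ℕ) + 1) ∉ DS n S := by
          simp only [DS, Finset.mem_insert, Finset.mem_image]
          push_neg
          refine ⟨by omega, by omega, ?_⟩
          rintro t ht hteq
          have hts : (t : ℕ) = (s : ℕ) := by omega
          exact hs (Fin.ext hts ▸ ht)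
        exact not_invPt_decode _ _ hsn hnot ((mem_DInv _).mp hmem).2
      · intro hs
        rw [mem_DInv]
        refine ⟨by omega, invPt_decode_of_mem _ _ ?_⟩
        simp only [DS, Finset.mem_insert, Finset.mem_image]
        exact Or.inr (Or.inr ⟨s, hs, rfl⟩)
  rw [Nat.card_congr e, Nat.card_eq_fintype_card, Fintype.card_finset, Fintype.card_fin]

theorem count_231_avoiding_fpf_involutions (n : ℕ) :
    (Odd n → Nat.card {π : Equiv.Perm (Fin n) //
        Avoids231 π ∧ π * π = 1 ∧ ∀ i, π i ≠ i} = 0) ∧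
    (Even n → 2 ≤ n → Nat.card {π : Equiv.Perm (Fin n) //
        Avoids231 π ∧ π * π = 1 ∧ ∀ i, π i ≠ i} = 2 ^ (n / 2 - 1)) := by
  constructor
  · intro hodd
    have hempty : IsEmpty {π : Equiv.Perm (Fin n) //
        Avoids231 π ∧ π * π = 1 ∧ ∀ i, π i ≠ i} := by
      constructor
      rintro ⟨π, _, hI, hF⟩
      have hinv : ∀ i, π (π i) = i := (mul_self_iff π).mp hI
      have heven : Even n :=
        even_of_invPt π hinv hF (le_refl n) (fun j _ => (π j).2)
      exact (Nat.not_even_iff_odd.mpr hodd) heven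
    exact Nat.card_of_isEmpty
  · intro heven h2
    obtain ⟨k, hk⟩ := heven
    have hk' : n = 2 * k := by omega
    have := card_main n k hk' (by omega)
    rw [this, hk']
    congr 1
    omega
end

section
/- The number of 231-avoiding permutations of [n] all of whose cycles have length exactly 3 is 0 when 3 does not divide n, and 3^{(n/3)-1} when n ≥ 3 is divisible by 3. -/
/-!
Let `π` on `N + 3` points avoid 231 and have all cycles of length 3. The cycle through the last
position is `N + 2 ↦ b ↦ a ↦ N + 2`, where `a` is the position of the maximum, and avoidance forces
`a < b`. Deleting this cycle and relabelling the remaining positions and values order-preservingly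
gives a permutation `ρ` of the same kind on `N` points, from which `π` is recovered by reinserting
the cycle at `(a, b)`. The pairs `(a, b)` allowed for a given `ρ` (its slots) are those at which the
insertion creates no 231 pattern. The empty permutation has the single slot `(0, 1)`, and a
permutation with cycle `N + 2 ↦ b ↦ a ↦ N + 2` has exactly the three slots `(a, b + 1)`,
`(a, b + 2)` and `(N + 3, N + 4)`, so the count triples at each step. If `3 ∤ n`, a permutation
of `n` points with `π ^ 3 = 1` has a fixed point, as its other orbits have size 3.
-/

namespace Avoids231Tri

open Finset Equiv

section PermNat

variable {n : ℕ}

/-- `π` as a function on `ℕ`, extended by the identity: this lets `omega` do the order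
bookkeeping. -/
def permNat (π : Perm (Fin n)) (v : ℕ) : ℕ := if h : v < n then π ⟨v, h⟩ else v

lemma permNat_val (π : Perm (Fin n)) (x : Fin n) : permNat π x = π x := by
  simp [permNat]

lemma permNat_lt (π : Perm (Fin n)) {v : ℕ} (hv : v < n) : permNat π v < n := by
  simp [permNat, hv]

lemma permNat_inj (π : Perm (Fin n)) {u v : ℕ} (hu : u < n) (hv : v < n) :
    permNat π u = permNat π v ↔ u = v := by
  simp [permNat, hu, hv, ← Fin.ext_iff]

lemma exists_permNat_eq (π : Perm (Fin n)) {w : ℕ} (hw : w < n) : ∃ v < n, permNat π v = w :=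
  ⟨π.symm ⟨w, hw⟩, (π.symm _).2, by simp [permNat_val]⟩

lemma permNat_ne_self {π : Perm (Fin n)} (hfix : ∀ i, π i ≠ i) {v : ℕ} (hv : v < n) :
    permNat π v ≠ v := by
  simpa [permNat, hv, Fin.ext_iff] using hfix ⟨v, hv⟩

lemma permNat_permNat_permNat {π : Perm (Fin n)} (h3 : π ^ 3 = 1) {v : ℕ} (hv : v < n) :
    permNat π (permNat π (permNat π v)) = v := by
  have := congr($h3 ⟨v, hv⟩)
  simpa [permNat, hv, pow_succ, Fin.ext_iff] using this

lemma ext_permNat {π σ : Perm (Fin n)} (h : ∀ v < n, permNat π v = permNat σ v) : π = σ :=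
  Equiv.ext fun x ↦ Fin.ext <| by simpa [permNat_val] using h x x.2

def NoPattern231 (n : ℕ) (f : ℕ → ℕ) : Prop :=
  ∀ i j k, i < j → j < k → k < n → ¬ (f k < f i ∧ f i < f j)

lemma avoids231_iff {π : Perm (Fin n)} : Avoids231 π ↔ NoPattern231 n (permNat π) := by
  refine ⟨fun h i j k hij hjk hk hpat ↦ h ?_, fun h ⟨i, j, k, hij, hjk, hpat⟩ ↦ ?_⟩
  · refine ⟨⟨i, by omega⟩, ⟨j, by omega⟩, ⟨k, hk⟩, hij, hjk, ?_⟩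
    simpa [permNat, show i < n by omega, show j < n by omega, hk] using hpat
  · exact h i j k hij hjk k.2 (by simpa [permNat_val] using hpat)

def permOfCube (f : ℕ → ℕ) (hf : ∀ x < n, f x < n) (h3 : ∀ x < n, f (f (f x)) = x) :
    Perm (Fin n) where
  toFun x := ⟨f x, hf x x.2⟩
  invFun x := ⟨f (f x), hf _ (hf x x.2)⟩
  left_inv x := Fin.ext (h3 x x.2)
  right_inv x := Fin.ext (h3 x x.2)

variable {f : ℕ → ℕ} {hf : ∀ x < n, f x < n} {h3 : ∀ x < n, f (f (f x)) = x}

lemma permNat_permOfCube {x : ℕ} (hx : x < n) : permNat (permOfCube f hf h3) x = f x := by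
  simp [permNat, hx, permOfCube]

lemma permOfCube_pow_three : permOfCube f hf h3 ^ 3 = 1 :=
  Equiv.ext fun x ↦ Fin.ext <| by simp [pow_succ, permOfCube, h3 x x.2]

end PermNat

structure IsTri231 {n : ℕ} (π : Perm (Fin n)) : Prop where
  avoids : Avoids231 π
  pow_three : π ^ 3 = 1
  ne_self : ∀ i, π i ≠ i

abbrev Tri231 (n : ℕ) := {π : Perm (Fin n) // IsTri231 π}

lemma isTri231_permOfCube {n : ℕ} {f : ℕ → ℕ} (hf : ∀ x < n, f x < n)
    (h3 : ∀ x < n, f (f (f x)) = x) (hne : ∀ x < n, f x ≠ x) (hav : NoPattern231 n f) :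
    IsTri231 (permOfCube f hf h3) where
  avoids := avoids231_iff.2 fun i j k hij hjk hk ↦ by
    simpa only [permNat_permOfCube (show i < n by omega), permNat_permOfCube (show j < n by omega),
      permNat_permOfCube hk] using hav i j k hij hjk hk
  pow_three := permOfCube_pow_three
  ne_self x hx := hne x x.2 (congrArg Fin.val hx)

section Blocks

variable {n : ℕ} (π : Perm (Fin n))

lemma permNat_lt_iff_of_forall_lt {a : ℕ} (h : ∀ i < a, permNat π i < a) {x : ℕ} (hx : x < n) :
    permNat π x < a ↔ x < a := by
  refine ⟨fun hfx ↦ ?_, h x⟩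
  by_contra hxa
  have hinj : Set.InjOn (permNat π) (range a) := fun u hu v hv ↦
    (permNat_inj π (by rw [mem_coe, mem_range] at hu; omega)
      (by rw [mem_coe, mem_range] at hv; omega)).1
  have himage : (range a).image (permNat π) = range a :=
    eq_of_subset_of_card_le (fun y hy ↦ by
      obtain ⟨i, hi, rfl⟩ := mem_image.1 hy
      exact mem_range.2 (h i (mem_range.1 hi))) (card_image_of_injOn hinj).ge
  obtain ⟨y, hy, hxy⟩ := mem_image.1 (himage ▸ mem_range.2 hfx)
  rw [mem_range] at hy
  have := (permNat_inj π (by omega) hx).1 hxy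
  omega

lemma permNat_lt_of_lt_max {π : Perm (Fin n)} (hav : Avoids231 π) {p : ℕ} (hp : p < n)
    (hmax : permNat π p + 1 = n) {i : ℕ} (hi : i < p) : permNat π i < p := by
  rw [avoids231_iff] at hav
  have hfi : permNat π i < permNat π p := by
    have := permNat_lt π (hi.trans hp)
    have := (permNat_inj π (hi.trans hp) hp).not.2 hi.ne
    omega
  by_contra! hge
  -- every value below `permNat π i` sits at one of the `p - 1` positions before `p` other than `i`
  have hsub : range (permNat π i) ⊆ ((range p).erase i).image (permNat π) := by
    intro w hw
    rw [mem_range] at hw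
    obtain ⟨x, hx, rfl⟩ := exists_permNat_eq π (hw.trans (permNat_lt π (hi.trans hp)))
    refine mem_image.2 ⟨x, mem_erase.2 ⟨by rintro rfl; omega, mem_range.2 ?_⟩, rfl⟩
    by_contra! hpx
    rcases hpx.lt_or_eq with hpx | rfl
    · exact hav i p x hi hpx hx ⟨hw, hfi⟩
    · omega
  have := (card_le_card hsub).trans card_image_le
  rw [card_range, card_erase_of_mem (mem_range.2 hi), card_range] at this
  omega

end Blocks

section SkipTwo

/-- For `a < b`, the increasing enumeration of `ℕ ∖ {a, b}`. -/
def skipTwo (a b v : ℕ) : ℕ := if v < a then v else if v + 1 < b then v + 1 else v + 2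

def unskipTwo (a b x : ℕ) : ℕ := if x < a then x else if x < b then x - 1 else x - 2

variable {a b : ℕ}

lemma skipTwo_ne_left (v : ℕ) : skipTwo a b v ≠ a := by
  unfold skipTwo; split_ifs <;> omega

lemma skipTwo_ne_right (hab : a < b) (v : ℕ) : skipTwo a b v ≠ b := by
  unfold skipTwo; split_ifs <;> omega

lemma skipTwo_lt_skipTwo_iff {u v : ℕ} : skipTwo a b u < skipTwo a b v ↔ u < v := by
  unfold skipTwo; split_ifs <;> omega

lemma skipTwo_inj {u v : ℕ} : skipTwo a b u = skipTwo a b v ↔ u = v := by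
  unfold skipTwo; split_ifs <;> omega

lemma skipTwo_lt_left_iff {v : ℕ} : skipTwo a b v < a ↔ v < a := by
  unfold skipTwo; split_ifs <;> omega

lemma left_lt_skipTwo_iff {v : ℕ} : a < skipTwo a b v ↔ a ≤ v := by
  unfold skipTwo; split_ifs <;> omega

lemma skipTwo_lt_right_iff (hab : a < b) {v : ℕ} : skipTwo a b v < b ↔ v + 2 ≤ b := by
  unfold skipTwo; split_ifs <;> omega

lemma right_lt_skipTwo_iff (hab : a < b) {v : ℕ} : b < skipTwo a b v ↔ b ≤ v + 1 := by
  unfold skipTwo; split_ifs <;> omega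

lemma skipTwo_lt {N v : ℕ} (hv : v < N) : skipTwo a b v < N + 2 := by
  unfold skipTwo; split_ifs <;> omega

lemma unskipTwo_skipTwo (v : ℕ) : unskipTwo a b (skipTwo a b v) = v := by
  unfold skipTwo unskipTwo; split_ifs <;> omega

lemma skipTwo_unskipTwo (hab : a < b) {x : ℕ} (hxa : x ≠ a) (hxb : x ≠ b) :
    skipTwo a b (unskipTwo a b x) = x := by
  unfold skipTwo unskipTwo; split_ifs <;> omega

lemma unskipTwo_lt {N : ℕ} (hab : a < b) (hb : b ≤ N + 1) {x : ℕ} (hx : x < N + 3)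
    (hxa : x ≠ a) (hxb : x ≠ b) (hxN : x ≠ N + 2) : unskipTwo a b x < N := by
  unfold unskipTwo; split_ifs <;> omega

lemma exists_skipTwo_eq {N : ℕ} (hab : a < b) (hb : b ≤ N + 1) {x : ℕ} (hx : x < N + 3)
    (hxa : x ≠ a) (hxb : x ≠ b) (hxN : x ≠ N + 2) : ∃ v < N, skipTwo a b v = x :=
  ⟨_, unskipTwo_lt hab hb hx hxa hxb hxN, skipTwo_unskipTwo hab hxa hxb⟩

lemma eq_or_eq_or_eq_or_exists_skipTwo {N : ℕ} (hab : a < b) (hb : b ≤ N + 1) {x : ℕ}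
    (hx : x < N + 3) : x = a ∨ x = b ∨ x = N + 2 ∨ ∃ v < N, skipTwo a b v = x := by
  by_contra! h
  obtain ⟨v, hv, hvx⟩ := exists_skipTwo_eq hab hb hx h.1 h.2.1 h.2.2.1
  exact h.2.2.2 v hv hvx

end SkipTwo

section Insert

variable {N : ℕ}

/-- `(a, b)` is a place where the 3-cycle `a ↦ N + 2 ↦ b ↦ a` can be inserted into `ρ` (see
`insertCycle`) without creating a 231 pattern: `prefix_lt` rules out the patterns through the new
maximum at position `a`, `mid` those ending at position `b`, and `last` those ending at the new
last position `N + 2`. -/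
structure IsSlot (ρ : Perm (Fin N)) (a b : ℕ) : Prop where
  lt : a < b
  le : b ≤ N + 1
  prefix_lt : ∀ i < a, permNat ρ i < a
  last : ∀ i j, i < j → j < N → b ≤ permNat ρ i + 1 → permNat ρ j ≤ permNat ρ i
  mid : ∀ i j, i < j → j + 2 ≤ b → a ≤ permNat ρ i → permNat ρ j ≤ permNat ρ i

def insertCycle (ρ : Perm (Fin N)) (a b x : ℕ) : ℕ :=
  if x = a then N + 2 else if x = N + 2 then b else if x = b then a
  else skipTwo a b (permNat ρ (unskipTwo a b x))

variable {ρ : Perm (Fin N)} {a b : ℕ}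

lemma insertCycle_left : insertCycle ρ a b a = N + 2 := by
  simp [insertCycle]

lemma insertCycle_top (hs : IsSlot ρ a b) : insertCycle ρ a b (N + 2) = b := by
  have := hs.lt; have := hs.le
  simp [insertCycle, show N + 2 ≠ a by omega]

lemma insertCycle_right (hs : IsSlot ρ a b) : insertCycle ρ a b b = a := by
  have := hs.lt; have := hs.le
  simp [insertCycle, show b ≠ a by omega, show b ≠ N + 2 by omega]

lemma insertCycle_skipTwo (hs : IsSlot ρ a b) {v : ℕ} (hv : v < N) :
    insertCycle ρ a b (skipTwo a b v) = skipTwo a b (permNat ρ v) := by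
  have := skipTwo_lt (a := a) (b := b) hv
  simp [insertCycle, skipTwo_ne_left, skipTwo_ne_right hs.lt, unskipTwo_skipTwo, this.ne]

lemma insertCycle_lt (hs : IsSlot ρ a b) {x : ℕ} (hx : x < N + 3) :
    insertCycle ρ a b x < N + 3 := by
  have := hs.lt; have := hs.le
  rcases eq_or_eq_or_eq_or_exists_skipTwo hs.lt hs.le hx with rfl | rfl | rfl | ⟨v, hv, rfl⟩
  · rw [insertCycle_left]; omega
  · rw [insertCycle_right hs]; omega
  · rw [insertCycle_top hs]; omega
  · rw [insertCycle_skipTwo hs hv]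
    have := skipTwo_lt (a := a) (b := b) (permNat_lt ρ hv)
    omega

lemma insertCycle_cube (hs : IsSlot ρ a b) (h3 : ρ ^ 3 = 1) {x : ℕ} (hx : x < N + 3) :
    insertCycle ρ a b (insertCycle ρ a b (insertCycle ρ a b x)) = x := by
  rcases eq_or_eq_or_eq_or_exists_skipTwo hs.lt hs.le hx with rfl | rfl | rfl | ⟨v, hv, rfl⟩
  · rw [insertCycle_left, insertCycle_top hs, insertCycle_right hs]
  · rw [insertCycle_right hs, insertCycle_left, insertCycle_top hs]
  · rw [insertCycle_top hs, insertCycle_right hs, insertCycle_left]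
  · have hv₁ := permNat_lt ρ hv
    rw [insertCycle_skipTwo hs hv, insertCycle_skipTwo hs hv₁,
      insertCycle_skipTwo hs (permNat_lt ρ hv₁), permNat_permNat_permNat h3 hv]

lemma insertCycle_ne_self (hs : IsSlot ρ a b) (hfix : ∀ i, ρ i ≠ i) {x : ℕ} (hx : x < N + 3) :
    insertCycle ρ a b x ≠ x := by
  have := hs.lt; have := hs.le
  rcases eq_or_eq_or_eq_or_exists_skipTwo hs.lt hs.le hx with rfl | rfl | rfl | ⟨v, hv, rfl⟩
  · rw [insertCycle_left]; omega
  · rw [insertCycle_right hs]; omega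
  · rw [insertCycle_top hs]; omega
  · rw [insertCycle_skipTwo hs hv, Ne, skipTwo_inj]
    exact permNat_ne_self hfix hv

lemma insertCycle_lt_left_iff (hs : IsSlot ρ a b) {x : ℕ} (hx : x < N + 3) :
    insertCycle ρ a b x < a ↔ x < a := by
  have := hs.lt; have := hs.le
  rcases eq_or_eq_or_eq_or_exists_skipTwo hs.lt hs.le hx with rfl | rfl | rfl | ⟨v, hv, rfl⟩
  · rw [insertCycle_left]; omega
  · rw [insertCycle_right hs]; omega
  · rw [insertCycle_top hs]; omega
  · rw [insertCycle_skipTwo hs hv, skipTwo_lt_left_iff, skipTwo_lt_left_iff,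
      permNat_lt_iff_of_forall_lt ρ hs.prefix_lt hv]

lemma noPattern231_insertCycle (hs : IsSlot ρ a b) (hav : Avoids231 ρ) :
    NoPattern231 (N + 3) (insertCycle ρ a b) := by
  rw [avoids231_iff] at hav
  intro i j k hij hjk hk ⟨hki, hij'⟩
  have hab := hs.lt; have hb := hs.le
  have hFk := insertCycle_lt_left_iff hs hk
  have hFi := insertCycle_lt_left_iff hs (show i < N + 3 by omega)
  have hFj := insertCycle_lt hs (show j < N + 3 by omega)
  -- the new entries at positions `a` and `b` cannot play the roles of the `2` and the `3`
  have hia : i ≠ a := by rintro rfl; rw [insertCycle_left] at hij'; omega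
  have hja : j ≠ a := by rintro rfl; omega
  have hib : i ≠ b := by rintro rfl; rw [insertCycle_right hs] at hki; omega
  have hjb : j ≠ b := by rintro rfl; rw [insertCycle_right hs] at hij'; omega
  obtain ⟨i, hi, rfl⟩ := exists_skipTwo_eq hs.lt hs.le (by omega) hia hib (by omega)
  obtain ⟨j, hj, rfl⟩ := exists_skipTwo_eq hs.lt hs.le (by omega) hja hjb (by omega)
  rw [insertCycle_skipTwo hs hi] at hki hij'
  rw [insertCycle_skipTwo hs hj, skipTwo_lt_skipTwo_iff] at hij'
  rw [skipTwo_lt_skipTwo_iff] at hij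
  have hFi_lt := skipTwo_lt (a := a) (b := b) (permNat_lt ρ hi)
  rcases eq_or_eq_or_eq_or_exists_skipTwo hs.lt hs.le hk with rfl | rfl | rfl | ⟨k, hk', rfl⟩
  · rw [insertCycle_left] at hki; omega
  · rw [insertCycle_right hs, left_lt_skipTwo_iff] at hki
    rw [skipTwo_lt_right_iff hs.lt] at hjk
    exact (hs.mid i j hij hjk hki).not_gt hij'
  · rw [insertCycle_top hs, right_lt_skipTwo_iff hs.lt] at hki
    exact (hs.last i j hij hj hki).not_gt hij'
  · rw [insertCycle_skipTwo hs hk', skipTwo_lt_skipTwo_iff] at hki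
    rw [skipTwo_lt_skipTwo_iff] at hjk
    exact hav i j k hij hjk hk' ⟨hki, hij'⟩

end Insert

section Remove

variable {N : ℕ} {π : Perm (Fin (N + 3))}

/-- When `π ^ 3 = 1`, the cycle through the last position is
`N + 2 ↦ lastValue π ↦ topPos π ↦ N + 2`. -/
def lastValue (π : Perm (Fin (N + 3))) : ℕ := permNat π (N + 2)

def topPos (π : Perm (Fin (N + 3))) : ℕ := permNat π (lastValue π)

lemma permNat_topPos (h3 : π ^ 3 = 1) : permNat π (topPos π) = N + 2 :=
  permNat_permNat_permNat h3 (by omega)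

lemma lastValue_lt (hfix : ∀ i, π i ≠ i) : lastValue π < N + 2 := by
  have := permNat_lt π (show N + 2 < N + 3 by omega)
  have := permNat_ne_self hfix (show N + 2 < N + 3 by omega)
  unfold lastValue; omega

lemma topPos_lt_lastValue (hπ : IsTri231 π) : topPos π < lastValue π := by
  have hb := lastValue_lt hπ.ne_self
  have hab : topPos π ≠ lastValue π := permNat_ne_self hπ.ne_self (by omega)
  have ha : topPos π < N + 2 := by
    have := permNat_lt π (show lastValue π < N + 3 by omega)
    have := permNat_ne_self hπ.ne_self (show topPos π < N + 3 by unfold topPos; omega)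
    rw [permNat_topPos hπ.pow_three] at this
    unfold topPos at *; omega
  by_contra! h
  -- otherwise the positions `lastValue π < topPos π < N + 2` form a 231 pattern
  have hba : lastValue π < topPos π := lt_of_le_of_ne h hab.symm
  refine avoids231_iff.1 hπ.avoids _ _ (N + 2) hba ha (by omega) ⟨hba, ?_⟩
  rw [permNat_topPos hπ.pow_three]
  exact ha

lemma permNat_lt_topPos (hπ : IsTri231 π) {i : ℕ} (hi : i < topPos π) :
    permNat π i < topPos π := by
  have := topPos_lt_lastValue hπ
  have := lastValue_lt hπ.ne_self
  exact permNat_lt_of_lt_max hπ.avoids (by omega) (by rw [permNat_topPos hπ.pow_three]) hi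

lemma permNat_lt_topPos_iff (hπ : IsTri231 π) {x : ℕ} (hx : x < N + 3) :
    permNat π x < topPos π ↔ x < topPos π :=
  permNat_lt_iff_of_forall_lt π (fun _ ↦ permNat_lt_topPos hπ) hx

def removeCycle (π : Perm (Fin (N + 3))) (x : ℕ) : ℕ :=
  unskipTwo (topPos π) (lastValue π) (permNat π (skipTwo (topPos π) (lastValue π) x))

lemma permNat_skipTwo_ne (hπ : IsTri231 π) {x : ℕ} (hx : x < N) :
    permNat π (skipTwo (topPos π) (lastValue π) x) ≠ topPos π ∧
      permNat π (skipTwo (topPos π) (lastValue π) x) ≠ lastValue π ∧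
      permNat π (skipTwo (topPos π) (lastValue π) x) ≠ N + 2 := by
  have hy := skipTwo_lt (a := topPos π) (b := lastValue π) hx
  have hb := lastValue_lt hπ.ne_self
  refine ⟨fun h ↦ skipTwo_ne_right (topPos_lt_lastValue hπ) x ?_, fun h ↦ ?_,
    fun h ↦ skipTwo_ne_left (a := topPos π) (b := lastValue π) x ?_⟩
  · exact (permNat_inj π (by omega) (by omega)).1 h
  · exact hy.ne ((permNat_inj π (by omega) (by omega)).1 h)
  · rw [← permNat_topPos hπ.pow_three] at h
    exact (permNat_inj π (by omega) (by unfold topPos; exact permNat_lt π (by omega))).1 h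

lemma skipTwo_removeCycle (hπ : IsTri231 π) {x : ℕ} (hx : x < N) :
    skipTwo (topPos π) (lastValue π) (removeCycle π x) =
      permNat π (skipTwo (topPos π) (lastValue π) x) :=
  skipTwo_unskipTwo (topPos_lt_lastValue hπ) (permNat_skipTwo_ne hπ hx).1
    (permNat_skipTwo_ne hπ hx).2.1

lemma removeCycle_lt (hπ : IsTri231 π) {x : ℕ} (hx : x < N) : removeCycle π x < N :=
  unskipTwo_lt (topPos_lt_lastValue hπ) (Nat.le_of_lt_succ (lastValue_lt hπ.ne_self))
    (permNat_lt π (by have := skipTwo_lt (a := topPos π) (b := lastValue π) hx; omega))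
    (permNat_skipTwo_ne hπ hx).1 (permNat_skipTwo_ne hπ hx).2.1 (permNat_skipTwo_ne hπ hx).2.2

lemma removeCycle_cube (hπ : IsTri231 π) {x : ℕ} (hx : x < N) :
    removeCycle π (removeCycle π (removeCycle π x)) = x := by
  have hx₁ := removeCycle_lt hπ hx
  have hx₂ := removeCycle_lt hπ hx₁
  have hy := skipTwo_lt (a := topPos π) (b := lastValue π) hx
  rw [← skipTwo_inj (a := topPos π) (b := lastValue π), skipTwo_removeCycle hπ hx₂,
    skipTwo_removeCycle hπ hx₁, skipTwo_removeCycle hπ hx,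
    permNat_permNat_permNat hπ.pow_three (by omega)]

lemma removeCycle_ne_self (hπ : IsTri231 π) {x : ℕ} (hx : x < N) : removeCycle π x ≠ x := by
  have hy := skipTwo_lt (a := topPos π) (b := lastValue π) hx
  rw [Ne, ← skipTwo_inj (a := topPos π) (b := lastValue π), skipTwo_removeCycle hπ hx]
  exact permNat_ne_self hπ.ne_self (by omega)

lemma permNat_skipTwo_lt_iff (hπ : IsTri231 π) {i j : ℕ} (hi : i < N) (hj : j < N) :
    permNat π (skipTwo (topPos π) (lastValue π) i) <
        permNat π (skipTwo (topPos π) (lastValue π) j) ↔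
      removeCycle π i < removeCycle π j := by
  rw [← skipTwo_removeCycle hπ hi, ← skipTwo_removeCycle hπ hj, skipTwo_lt_skipTwo_iff]

lemma noPattern231_removeCycle (hπ : IsTri231 π) : NoPattern231 N (removeCycle π) := by
  intro i j k hij hjk hk hpat
  have := skipTwo_lt (a := topPos π) (b := lastValue π) hk
  refine avoids231_iff.1 hπ.avoids _ _ (skipTwo (topPos π) (lastValue π) k)
    (skipTwo_lt_skipTwo_iff.2 hij) (skipTwo_lt_skipTwo_iff.2 hjk) (by omega) ?_
  rwa [permNat_skipTwo_lt_iff hπ hk (by omega), permNat_skipTwo_lt_iff hπ (by omega) (by omega)]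

def removePerm (hπ : IsTri231 π) : Perm (Fin N) :=
  permOfCube (removeCycle π) (fun _ ↦ removeCycle_lt hπ) (fun _ ↦ removeCycle_cube hπ)

lemma permNat_removePerm (hπ : IsTri231 π) {x : ℕ} (hx : x < N) :
    permNat (removePerm hπ) x = removeCycle π x :=
  permNat_permOfCube hx

lemma isTri231_removePerm (hπ : IsTri231 π) : IsTri231 (removePerm hπ) :=
  isTri231_permOfCube _ _ (fun _ ↦ removeCycle_ne_self hπ) (noPattern231_removeCycle hπ)

lemma isSlot_removePerm (hπ : IsTri231 π) :
    IsSlot (removePerm hπ) (topPos π) (lastValue π) := by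
  have hab := topPos_lt_lastValue hπ
  have hb := lastValue_lt hπ.ne_self
  have hav := avoids231_iff.1 hπ.avoids
  refine ⟨hab, by omega, fun i hi ↦ ?_, fun i j hij hj hbi ↦ ?_, fun i j hij hjb hai ↦ ?_⟩
  · have hy := skipTwo_lt (a := topPos π) (b := lastValue π) (show i < N by omega)
    rw [permNat_removePerm hπ (by omega), ← skipTwo_lt_left_iff (b := lastValue π),
      skipTwo_removeCycle hπ (by omega), permNat_lt_topPos_iff hπ (by omega), skipTwo_lt_left_iff]
    exact hi
  · rw [permNat_removePerm hπ (by omega)] at hbi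
    rw [permNat_removePerm hπ hj, permNat_removePerm hπ (show i < N by omega)]
    rw [← right_lt_skipTwo_iff hab, skipTwo_removeCycle hπ (by omega)] at hbi
    by_contra! hlt
    exact hav _ _ (N + 2) (skipTwo_lt_skipTwo_iff.2 hij) (skipTwo_lt hj) (by omega)
      ⟨hbi, (permNat_skipTwo_lt_iff hπ (by omega) hj).2 hlt⟩
  · rw [permNat_removePerm hπ (by omega)] at hai
    rw [permNat_removePerm hπ (show i < N by omega),
      permNat_removePerm hπ (show j < N by omega)]
    rw [← left_lt_skipTwo_iff (b := lastValue π), skipTwo_removeCycle hπ (by omega)] at hai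
    by_contra! hlt
    exact hav _ _ (lastValue π) (skipTwo_lt_skipTwo_iff.2 hij)
      ((skipTwo_lt_right_iff hab).2 hjb) (by omega)
      ⟨hai, (permNat_skipTwo_lt_iff hπ (by omega) (by omega)).2 hlt⟩

lemma insertCycle_removePerm (hπ : IsTri231 π) {x : ℕ} (hx : x < N + 3) :
    insertCycle (removePerm hπ) (topPos π) (lastValue π) x = permNat π x := by
  have hs := isSlot_removePerm hπ
  rcases eq_or_eq_or_eq_or_exists_skipTwo hs.lt hs.le hx with rfl | rfl | rfl | ⟨v, hv, rfl⟩
  · rw [insertCycle_left, permNat_topPos hπ.pow_three]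
  · rw [insertCycle_right hs]; rfl
  · rw [insertCycle_top hs]; rfl
  · rw [insertCycle_skipTwo hs hv, permNat_removePerm hπ hv, skipTwo_removeCycle hπ hv]

end Remove

section Reinsert

variable {N : ℕ} {ρ : Perm (Fin N)} {a b : ℕ}

def insertPerm (hs : IsSlot ρ a b) (h3 : ρ ^ 3 = 1) : Perm (Fin (N + 3)) :=
  permOfCube (insertCycle ρ a b) (fun _ ↦ insertCycle_lt hs) (fun _ ↦ insertCycle_cube hs h3)

lemma permNat_insertPerm (hs : IsSlot ρ a b) (h3 : ρ ^ 3 = 1) {x : ℕ} (hx : x < N + 3) :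
    permNat (insertPerm hs h3) x = insertCycle ρ a b x :=
  permNat_permOfCube hx

lemma lastValue_insertPerm (hs : IsSlot ρ a b) (h3 : ρ ^ 3 = 1) :
    lastValue (insertPerm hs h3) = b := by
  rw [lastValue, permNat_insertPerm hs h3 (by omega), insertCycle_top hs]

lemma topPos_insertPerm (hs : IsSlot ρ a b) (h3 : ρ ^ 3 = 1) :
    topPos (insertPerm hs h3) = a := by
  have := hs.le
  rw [topPos, lastValue_insertPerm, permNat_insertPerm hs h3 (by omega), insertCycle_right hs]

lemma removeCycle_insertPerm (hs : IsSlot ρ a b) (h3 : ρ ^ 3 = 1) {x : ℕ} (hx : x < N) :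
    removeCycle (insertPerm hs h3) x = permNat ρ x := by
  have := skipTwo_lt (a := a) (b := b) hx
  rw [removeCycle, topPos_insertPerm, lastValue_insertPerm, permNat_insertPerm hs h3 (by omega),
    insertCycle_skipTwo hs hx, unskipTwo_skipTwo]

lemma isTri231_insertPerm (hs : IsSlot ρ a b) (hρ : IsTri231 ρ) :
    IsTri231 (insertPerm hs hρ.pow_three) :=
  isTri231_permOfCube _ _ (fun _ ↦ insertCycle_ne_self hs hρ.ne_self)
    (noPattern231_insertCycle hs hρ.avoids)

end Reinsert

section Slots

variable {N : ℕ}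

def slots (ρ : Perm (Fin N)) : Set (ℕ × ℕ) := {p | IsSlot ρ p.1 p.2}

instance (ρ : Perm (Fin N)) : Finite (slots ρ) :=
  Set.Finite.to_subtype <| (Set.finite_Iic (N + 1, N + 1)).subset fun _ hp ↦
    ⟨(Nat.lt_of_lt_of_le hp.lt hp.le).le, hp.le⟩

lemma isSlot_fresh (ρ : Perm (Fin N)) : IsSlot ρ N (N + 1) where
  lt := N.lt_succ_self
  le := le_rfl
  prefix_lt _ hi := permNat_lt ρ hi
  last i _ hij hj hi := by have := permNat_lt ρ (hij.trans hj); omega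
  mid i _ hij hj hi := by have := permNat_lt ρ (show i < N by omega); omega

lemma slots_of_fin_zero (ρ : Perm (Fin 0)) : slots ρ = {(0, 1)} := by
  ext ⟨a, b⟩
  refine ⟨fun hs ↦ ?_, fun h ↦ ?_⟩
  · have := hs.lt; have := hs.le
    simp only [Set.mem_singleton_iff, Prod.mk.injEq]; omega
  · obtain ⟨rfl, rfl⟩ := Prod.mk.inj (Set.mem_singleton_iff.1 h)
    exact isSlot_fresh ρ

variable {π : Perm (Fin (N + 3))}

lemma isSlot_topPos (hπ : IsTri231 π) {b : ℕ} (hb₁ : lastValue π < b)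
    (hb₂ : b ≤ lastValue π + 2) : IsSlot π (topPos π) b := by
  have hab := topPos_lt_lastValue hπ
  have hlast := lastValue_lt hπ.ne_self
  have hav := avoids231_iff.1 hπ.avoids
  have hπN : permNat π (N + 2) = lastValue π := rfl
  have hπb : permNat π (lastValue π) = topPos π := rfl
  refine ⟨by omega, by omega, fun _ ↦ permNat_lt_topPos hπ, fun i j hij hj hbi ↦ ?_,
    fun i j hij hjb hai ↦ ?_⟩
  · by_contra! hlt
    have hi_ne : permNat π i ≠ lastValue π := fun h ↦ by
      have := (permNat_inj π (by omega) (show N + 2 < N + 3 by omega)).1 h; omega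
    rcases (show j < N + 2 ∨ j = N + 2 by omega) with hj | rfl
    · exact hav i j (N + 2) hij hj (by omega) ⟨by omega, hlt⟩
    · omega
  · by_contra! hlt
    have hi_ne : permNat π i ≠ topPos π := fun h ↦ by
      have := (permNat_inj π (by omega) (show lastValue π < N + 3 by omega)).1 h; omega
    rcases (show j < lastValue π ∨ j = lastValue π by omega) with hj | rfl
    · exact hav i j (lastValue π) hij hj (by omega) ⟨by omega, hlt⟩
    · omega

lemma lastValue_lt_of_isSlot (hπ : IsTri231 π) {a b : ℕ} (hs : IsSlot π a b) :
    lastValue π < b := by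
  have hlast := lastValue_lt hπ.ne_self
  have hπN : permNat π (N + 2) = lastValue π := rfl
  by_contra! hb
  have := hs.lt
  -- the value `b - 1` sits before the last position, which carries the larger value `lastValue π`
  obtain ⟨p, hp, hpb⟩ := exists_permNat_eq π (show b - 1 < N + 3 by omega)
  have hpN : p ≠ N + 2 := by rintro rfl; omega
  have := hs.last p (N + 2) (by omega) (by omega) (by omega)
  omega

lemma eq_of_isSlot (hπ : IsTri231 π) {a b : ℕ} (hs : IsSlot π a b) :
    a = topPos π ∧ (b = lastValue π + 1 ∨ b = lastValue π + 2) ∨ a = N + 3 ∧ b = N + 4 := by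
  have hab := topPos_lt_lastValue hπ
  have hlast := lastValue_lt hπ.ne_self
  have hb := lastValue_lt_of_isSlot hπ hs
  have hπa := permNat_topPos hπ.pow_three
  have := hs.lt; have := hs.le
  rcases lt_trichotomy a (topPos π) with ha | rfl | ha
  · have hle : a ≤ permNat π a := by
      by_contra! h
      exact (permNat_lt_iff_of_forall_lt π hs.prefix_lt (show a < N + 3 by omega)).1 h |>.false
    have hne := (permNat_inj π (show a < N + 3 by omega)
      (show topPos π < N + 3 by omega)).not.2 ha.ne
    have := hs.mid a (topPos π) ha (by omega) hle
    have := permNat_lt π (show a < N + 3 by omega)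
    omega
  · by_contra! hb'
    have hmid := hs.mid (lastValue π) (lastValue π + 1) (by omega) (by omega) le_rfl
    have hne := (permNat_inj π (show lastValue π + 1 < N + 3 by omega)
      (show lastValue π < N + 3 by omega)).not.2 (by omega)
    have hπb : permNat π (lastValue π) = topPos π := rfl
    have := (permNat_lt_topPos_iff hπ (show lastValue π + 1 < N + 3 by omega)).1 (by omega)
    omega
  · have := hs.prefix_lt _ ha
    omega

lemma slots_eq (hπ : IsTri231 π) :
    slots π = {(topPos π, lastValue π + 1), (topPos π, lastValue π + 2), (N + 3, N + 4)} := by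
  ext ⟨a, b⟩
  simp only [Set.mem_insert_iff, Set.mem_singleton_iff, Prod.mk.injEq]
  refine ⟨fun hs ↦ ?_, ?_⟩
  · have := eq_of_isSlot hπ hs
    omega
  · rintro (⟨rfl, rfl⟩ | ⟨rfl, rfl⟩ | ⟨rfl, rfl⟩)
    · exact isSlot_topPos hπ (by omega) (by omega)
    · exact isSlot_topPos hπ (by omega) (by omega)
    · exact isSlot_fresh π

lemma ncard_slots (hπ : IsTri231 π) : (slots π).ncard = 3 := by
  have hab := topPos_lt_lastValue hπ
  have hlast := lastValue_lt hπ.ne_self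
  rw [slots_eq hπ, Set.ncard_eq_three]
  exact ⟨_, _, _, by simp, by simp; omega, by simp; omega, rfl⟩

end Slots

section Count

def removeEquiv (N : ℕ) : Tri231 (N + 3) ≃ Σ ρ : Tri231 N, slots ρ.1 where
  toFun π := ⟨⟨removePerm π.2, isTri231_removePerm π.2⟩,
    ⟨(topPos π.1, lastValue π.1), isSlot_removePerm π.2⟩⟩
  invFun s := ⟨insertPerm s.2.2 s.1.2.pow_three, isTri231_insertPerm s.2.2 s.1.2⟩
  left_inv π := Subtype.ext <| ext_permNat fun x hx ↦
    (permNat_insertPerm (isSlot_removePerm π.2) (isTri231_removePerm π.2).pow_three hx).trans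
      (insertCycle_removePerm π.2 hx)
  right_inv s := by
    refine Sigma.subtype_ext (Subtype.ext <| ext_permNat fun x hx ↦ ?_) ?_
    · rw [permNat_removePerm _ hx]
      exact removeCycle_insertPerm s.2.2 s.1.2.pow_three hx
    · exact Prod.ext (topPos_insertPerm s.2.2 s.1.2.pow_three)
        (lastValue_insertPerm s.2.2 s.1.2.pow_three)

noncomputable instance (n : ℕ) : Fintype (Tri231 n) := Fintype.ofFinite _

lemma card_tri231_add_three (N : ℕ) :
    Nat.card (Tri231 (N + 3)) = ∑ ρ : Tri231 N, (slots ρ.1).ncard := by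
  rw [Nat.card_congr (removeEquiv N), Nat.card_sigma]
  simp only [Nat.card_coe_set_eq]

lemma card_tri231_zero : Fintype.card (Tri231 0) = 1 :=
  Fintype.card_eq_one_iff.2
    ⟨⟨1, ⟨fun ⟨i, _⟩ ↦ i.elim0, one_pow 3, fun i ↦ i.elim0⟩⟩, fun _ ↦ Subsingleton.elim _ _⟩

lemma card_tri231_three_mul_add_three (m : ℕ) : Nat.card (Tri231 (3 * m + 3)) = 3 ^ m := by
  induction m with
  | zero =>
    rw [card_tri231_add_three]
    simp [slots_of_fin_zero, card_tri231_zero]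
  | succ m ih =>
    rw [show 3 * (m + 1) + 3 = 3 * m + 3 + 3 by ring, card_tri231_add_three,
      Finset.sum_congr rfl fun ρ _ ↦ ncard_slots ρ.2, sum_const, card_univ,
      ← Nat.card_eq_fintype_card, ih, pow_succ, smul_eq_mul, mul_comm]

lemma isEmpty_tri231 {n : ℕ} (hn : ¬ 3 ∣ n) : IsEmpty (Tri231 n) := by
  refine ⟨fun π ↦ ?_⟩
  obtain ⟨x, hx⟩ := Equiv.Perm.exists_fixed_point_of_prime (α := Fin n) (p := 3) (n := 1)
    (by simpa using hn) (by simpa using π.2.pow_three)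
  exact π.2.ne_self x hx

end Count

end Avoids231Tri

theorem count_231_avoiding_all_three_cycles (n : ℕ) :
    (¬ (3 ∣ n) → Nat.card {π : Equiv.Perm (Fin n) //
        Avoids231 π ∧ π ^ 3 = 1 ∧ ∀ i, π i ≠ i} = 0) ∧
    (3 ∣ n → 3 ≤ n → Nat.card {π : Equiv.Perm (Fin n) //
        Avoids231 π ∧ π ^ 3 = 1 ∧ ∀ i, π i ≠ i} = 3 ^ (n / 3 - 1)) := by
  have hcard : Nat.card {π : Equiv.Perm (Fin n) // Avoids231 π ∧ π ^ 3 = 1 ∧ ∀ i, π i ≠ i} =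
      Nat.card (Avoids231Tri.Tri231 n) :=
    Nat.card_congr <| Equiv.subtypeEquivRight fun _ ↦
      ⟨fun ⟨h₁, h₂, h₃⟩ ↦ ⟨h₁, h₂, h₃⟩, fun h ↦ ⟨h.avoids, h.pow_three, h.ne_self⟩⟩
  rw [hcard]
  refine ⟨fun hn ↦ ?_, fun ⟨m, hm⟩ hn ↦ ?_⟩
  · have := Avoids231Tri.isEmpty_tri231 hn
    exact Nat.card_of_isEmpty
  · obtain ⟨k, rfl⟩ : ∃ k, m = k + 1 := ⟨m - 1, by omega⟩
    rw [hm, show 3 * (k + 1) = 3 * k + 3 by ring, Avoids231Tri.card_tri231_three_mul_add_three]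
    congr 1
    omega
end

section
/- If π ∈ S_n avoids 132 and g is a fixed point of π, and a<b<c form a 3-cycle of π, then it is impossible that g < a < b < c. That is, no fixed point can occur before (in value/position) all three elements of any 3-cycle. -/
def Avoids132 {n : ℕ} (π : Equiv.Perm (Fin n)) : Prop :=
  ¬ ∃ i j k : Fin n, i < j ∧ j < k ∧ π i < π k ∧ π k < π j

theorem no_fixed_point_before_three_cycle {n : ℕ} (π : Equiv.Perm (Fin n))
    (h : Avoids132 π) (g a b c : Fin n) (hg : π g = g)
    (hab : a < b) (hbc : b < c)
    (hcyc : (π a = b ∧ π b = c ∧ π c = a) ∨ (π a = c ∧ π c = b ∧ π b = a)) :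
    ¬ (g < a) := by
  intro hga
  apply h
  rcases hcyc with ⟨h1, h2, h3⟩ | ⟨h1, h2, h3⟩
  · exact ⟨g, a, c, hga, lt_trans hab hbc, by rw [hg, h3]; exact hga, by rw [h3, h1]; exact hab⟩
  · exact ⟨g, a, b, hga, hab, by rw [hg, h3]; exact hga, by rw [h3, h1]; exact lt_trans hab hbc⟩
end

section
/- Suppose π ∈ S_n avoids 132 and contains two disjoint 3-cycles on {a₁,b₁,c₁} and {a₂,b₂,c₂} (with a_i<b_i<c_i) of opposite orientations, i.e., one is of the form (a,b,c) (π(a)=b, π(b)=c, π(c)=a) and the other of the form (a,c,b) (π(a)=c, π(c)=b, π(b)=a). Then, up to swapping the two cycles, the elements interleave as a₁<a₂<b₂<c₂<b₁<c₁ or a₂<a₁<b₁<c₁<b₂<c₂ (configuration (C): one cycle's b,c lie strictly between the other cycle's a and b). -/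
private lemma opp_helper {n : ℕ} (π : Equiv.Perm (Fin n)) (h : Avoids132 π)
    (a₁ b₁ c₁ a₂ b₂ c₂ : Fin n)
    (h1 : a₁ < b₁) (h2 : b₁ < c₁) (h3 : a₂ < b₂) (h4 : b₂ < c₂)
    (p1 : π a₁ = b₁) (p2 : π b₁ = c₁) (p3 : π c₁ = a₁)
    (q1 : π a₂ = c₂) (q2 : π c₂ = b₂) (q3 : π b₂ = a₂) :
    (a₁ < a₂ ∧ c₂ < b₁) ∨ (a₂ < a₁ ∧ c₁ < b₂) := by
  have inj : ∀ x y : Fin n, x = y → π x = π y := fun x y e => by rw [e]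
  rcases lt_trichotomy a₁ a₂ with hA | hA | hA
  · -- a₁ < a₂ ; show c₂ < b₁
    left
    refine ⟨hA, ?_⟩
    rcases lt_trichotomy c₂ b₁ with hB | hB | hB
    · exact hB
    · -- c₂ = b₁ : then b₂ = c₁, then a₂ = a₁ ... contradictions
      have e1 : b₂ = c₁ := by rw [← q2, ← p2, hB]
      omega
    · -- b₁ < c₂
      exfalso
      rcases lt_trichotomy b₁ b₂ with hC | hC | hC
      · -- b₁ < b₂ : witness (a₁, a₂, c₂)
        exact h ⟨a₁, a₂, c₂, hA, by omega, by rw [p1, q2]; exact hC, by rw [q2, q1]; exact h4⟩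
      · -- b₁ = b₂ : c₁ = a₂
        have e1 : c₁ = a₂ := by rw [← p2, ← q3, hC]
        omega
      · -- b₂ < b₁ : witness (b₂, b₁, c₂)
        exact h ⟨b₂, b₁, c₂, hC, hB, by rw [q3, q2]; exact h3, by rw [q2, p2]; omega⟩
  · -- a₁ = a₂ : then b₁ = c₂, then c₁ = b₂, contradiction with orders
    exfalso
    have e1 : b₁ = c₂ := by rw [← p1, ← q1, hA]
    have e2 : c₁ = b₂ := by rw [← p2, ← q2, e1]
    omega
  · -- a₂ < a₁ ; show c₁ < b₂
    right
    refine ⟨hA, ?_⟩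
    rcases lt_trichotomy c₁ b₂ with hB | hB | hB
    · exact hB
    · -- c₁ = b₂ : a₁ = a₂
      have e1 : a₁ = a₂ := by rw [← p3, ← q3, hB]
      omega
    · -- b₂ < c₁
      exfalso
      rcases lt_trichotomy b₁ b₂ with hC | hC | hC
      · -- b₁ < b₂ : witness (a₁, b₁, c₂)
        exact h ⟨a₁, b₁, c₂, h1, by omega, by rw [p1, q2]; exact hC, by rw [q2, p2]; exact hB⟩
      · -- b₁ = b₂ : c₁ = a₂
        have e1 : c₁ = a₂ := by rw [← p2, ← q3, hC]
        omega
      · -- b₂ < b₁ : witness (b₂, b₁, c₁)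
        exact h ⟨b₂, b₁, c₁, hC, h2, by rw [q3, p3]; exact hA, by rw [p3, p2]; omega⟩

theorem opposite_orientation_config {n : ℕ} (π : Equiv.Perm (Fin n)) (h : Avoids132 π)
    (a₁ b₁ c₁ a₂ b₂ c₂ : Fin n)
    (h1 : a₁ < b₁) (h2 : b₁ < c₁) (h3 : a₂ < b₂) (h4 : b₂ < c₂)
    (hcyc : ((π a₁ = b₁ ∧ π b₁ = c₁ ∧ π c₁ = a₁) ∧ (π a₂ = c₂ ∧ π c₂ = b₂ ∧ π b₂ = a₂)) ∨
            ((π a₁ = c₁ ∧ π c₁ = b₁ ∧ π b₁ = a₁) ∧ (π a₂ = b₂ ∧ π b₂ = c₂ ∧ π c₂ = a₂))) :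
    (a₁ < a₂ ∧ c₂ < b₁) ∨ (a₂ < a₁ ∧ c₁ < b₂) := by
  rcases hcyc with ⟨⟨p1, p2, p3⟩, ⟨q1, q2, q3⟩⟩ | ⟨⟨p1, p2, p3⟩, ⟨q1, q2, q3⟩⟩
  · exact opp_helper π h a₁ b₁ c₁ a₂ b₂ c₂ h1 h2 h3 h4 p1 p2 p3 q1 q2 q3
  · exact (opp_helper π h a₂ b₂ c₂ a₁ b₁ c₁ h3 h4 h1 h2 q1 q2 q3 p1 p2 p3).symm
end
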